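/- arXiv:2303.15010 — 6 statements merged into one kernel-verified Lean document; each statement's English description precedes it below -/
import Mathlib

section
/- Let p ≥ 5 be a prime and n ≥ 1 an integer. If ν_p(H(n)) ≤ 2, then ν_p(H(pn)) = ν_p(H(n)) − 1, where H(n) = 1 + 1/2 + ⋯ + 1/n is the n-th harmonic number. -/
/-! Sorting `1, …, pn` by divisibility by `p` gives `H(pn) = H(n)/p + ∑_{j<n} B_j` with
`B_j = ∑_{0<r<p} 1/(jp + r)`. Pairing `r` with `p - r` gives
`2 B_j = p (2j + 1) ∑_{0<r<p} 1/((jp + r)((j + 1)p - r))`, and the last sum reduces mod `p` to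
`-∑_{0<r<p} r⁻² = 0` (the squares sum to zero in `ZMod p` once `p ≥ 5`), so `ν_p(B_j) ≥ 2`.
As `ν_p(H(n)/p) = ν_p(H(n)) - 1 ≤ 1`, the ultrametric inequality gives the claim. -/

open Finset

def H (n : ℕ) : ℚ := ∑ i ∈ Finset.range n, (1 : ℚ) / (i + 1)

theorem H_eq_harmonic : H = harmonic := by
  funext n
  simp [H, harmonic]

def harmonicBlock (p j : ℕ) : ℚ := ∑ r ∈ Ico 1 p, ((j * p + r : ℕ) : ℚ)⁻¹

theorem sum_range_inv_eq_harmonicBlock_add (p n : ℕ) :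
    ∑ i ∈ range p, ((p * n + i + 1 : ℕ) : ℚ)⁻¹
      = harmonicBlock p n + (p : ℚ)⁻¹ * ((n + 1 : ℕ) : ℚ)⁻¹ := by
  cases p with
  | zero => simp [harmonicBlock]
  | succ q =>
    rw [harmonicBlock, sum_range_succ, sum_Ico_eq_sum_range, Nat.add_sub_cancel, ← mul_inv]
    congr 1
    · refine sum_congr rfl fun i _ => ?_
      push_cast
      ring_nf
    · push_cast
      ring_nf

theorem harmonic_mul_eq (p n : ℕ) :
    harmonic (p * n) = (p : ℚ)⁻¹ * harmonic n + ∑ j ∈ range n, harmonicBlock p j := by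
  induction n with
  | zero => simp
  | succ n ih =>
    rw [Nat.mul_succ, harmonic, sum_range_add, ← harmonic, ih, harmonic_succ, sum_range_succ,
      sum_range_inv_eq_harmonicBlock_add]
    ring

theorem two_mul_harmonicBlock (p j : ℕ) :
    2 * harmonicBlock p j
      = p * (2 * j + 1) * ∑ r ∈ Ico 1 p, (((j * p + r) * ((j + 1) * p - r) : ℤ) : ℚ)⁻¹ := by
  have hreflect : harmonicBlock p j = ∑ r ∈ Ico 1 p, (((j + 1) * p - r : ℤ) : ℚ)⁻¹ := by
    have h := sum_Ico_reflect (fun r => ((j * p + r : ℕ) : ℚ)⁻¹) 1 (Nat.le_succ p)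
    rw [Nat.add_sub_cancel_left, Nat.add_sub_cancel] at h
    rw [harmonicBlock, ← h]
    refine sum_congr rfl fun r hr => ?_
    rw [Nat.cast_add, Nat.cast_sub (mem_Ico.1 hr).2.le]
    push_cast
    ring_nf
  rw [two_mul]
  nth_rw 2 [hreflect]
  rw [harmonicBlock, ← sum_add_distrib, mul_sum]
  refine sum_congr rfl fun r hr => ?_
  obtain ⟨h1, h2⟩ := mem_Ico.1 hr
  have hr1 : (1 : ℚ) ≤ r := by exact_mod_cast h1
  have hrp : (r : ℚ) < p := by exact_mod_cast h2
  have hlow : (0 : ℚ) < j * p + r := by positivity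
  have hhigh : (0 : ℚ) < (j + 1) * p - r := by nlinarith [(j.cast_nonneg : (0 : ℚ) ≤ j)]
  push_cast
  rw [inv_add_inv hlow.ne' hhigh.ne', div_eq_mul_inv]
  ring

theorem natCast_ne_zero_of_mem_Ico {p r : ℕ} (hr : r ∈ Ico 1 p) : (r : ZMod p) ≠ 0 := by
  rw [Ne, ZMod.natCast_eq_zero_iff]
  obtain ⟨h1, h2⟩ := mem_Ico.1 hr
  exact Nat.not_dvd_of_pos_of_lt h1 h2

section Padic

variable {p : ℕ} [Fact p.Prime]

theorem exists_sum_inv_eq_div {ι : Type*} (s : Finset ι) (b : ι → ℤ)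
    (hb : ∀ i ∈ s, (b i : ZMod p) ≠ 0) :
    ∃ N D : ℤ, (D : ZMod p) ≠ 0 ∧ ∑ i ∈ s, (b i : ℚ)⁻¹ = N / D ∧
      (N : ZMod p) = D * ∑ i ∈ s, (b i : ZMod p)⁻¹ := by
  classical
  induction s using Finset.induction_on with
  | empty => exact ⟨0, 1, by simp, by simp, by simp⟩
  | insert a s ha ih =>
    obtain ⟨N, D, hD, hq, hN⟩ := ih fun i hi => hb i (mem_insert_of_mem hi)
    have hba : (b a : ZMod p) ≠ 0 := hb a (mem_insert_self a s)
    have hbaQ : (b a : ℚ) ≠ 0 := by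
      exact_mod_cast fun h : b a = 0 => hba (by rw [h, Int.cast_zero])
    have hDQ : (D : ℚ) ≠ 0 := by
      exact_mod_cast fun h : D = 0 => hD (by rw [h, Int.cast_zero])
    refine ⟨D + b a * N, b a * D, by push_cast; exact mul_ne_zero hba hD, ?_, ?_⟩
    · rw [sum_insert ha, hq]
      push_cast
      field_simp
    · rw [sum_insert ha]
      push_cast
      rw [hN]
      field_simp

theorem padicNorm_sum_inv_le {ι : Type*} (s : Finset ι) (b : ι → ℤ)
    (hb : ∀ i ∈ s, (b i : ZMod p) ≠ 0) (hsum : ∑ i ∈ s, (b i : ZMod p)⁻¹ = 0) :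
    padicNorm p (∑ i ∈ s, (b i : ℚ)⁻¹) ≤ (p : ℚ) ^ (-1 : ℤ) := by
  obtain ⟨N, D, hD, hq, hN⟩ := exists_sum_inv_eq_div s b hb
  have hpN : ((p ^ 1 : ℕ) : ℤ) ∣ N := by
    rw [pow_one, ← ZMod.intCast_zmod_eq_zero_iff_dvd, hN, hsum, mul_zero]
  have hnD : padicNorm p D = 1 :=
    (padicNorm.int_eq_one_iff D).2 (mt (ZMod.intCast_zmod_eq_zero_iff_dvd D p).2 hD)
  rw [hq, padicNorm.div, hnD, div_one]
  exact_mod_cast padicNorm.dvd_iff_norm_le.1 hpN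

theorem sum_Ico_one_inv_sq_eq_zero (hp5 : 5 ≤ p) :
    ∑ r ∈ Ico 1 p, ((r : ZMod p) ^ 2)⁻¹ = 0 := by
  calc ∑ r ∈ Ico 1 p, ((r : ZMod p) ^ 2)⁻¹
      = ∑ r ∈ range p, ((r : ZMod p) ^ 2)⁻¹ := by
        rw [range_eq_Ico, sum_eq_sum_Ico_succ_bot (Fact.out : p.Prime).pos]
        simp
    _ = ∑ x : ZMod p, (x ^ 2)⁻¹ := by
        refine sum_nbij' Nat.cast ZMod.val (by simp) (fun x _ => mem_range.2 x.val_lt)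
          (fun r hr => ZMod.val_cast_of_lt (mem_range.1 hr))
          (fun x _ => ZMod.natCast_zmod_val x) (fun _ _ => rfl)
    _ = ∑ x : ZMod p, x ^ 2 :=
        Fintype.sum_bijective _ inv_involutive.bijective _ _ fun x => by rw [inv_pow]
    _ = 0 := FiniteField.sum_pow_lt_card_sub_one _ _ (by rw [ZMod.card]; omega)

theorem padicValRat_add_eq_left {q r : ℚ} (hq : q ≠ 0)
    (hr : padicNorm p r < padicNorm p q) : padicValRat p (q + r) = padicValRat p q := by
  have hnorm : padicNorm p (q + r) = padicNorm p q := by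
    rw [padicNorm.add_eq_max_of_ne hr.ne', max_eq_left hr.le]
  have hqr : q + r ≠ 0 := fun h => padicNorm.nonzero hq (by rw [← hnorm, h, padicNorm.zero])
  rw [padicNorm.eq_zpow_of_nonzero hqr, padicNorm.eq_zpow_of_nonzero hq] at hnorm
  have hp := (Fact.out : p.Prime)
  exact neg_injective (zpow_right_injective₀ (by exact_mod_cast hp.pos)
    (by exact_mod_cast hp.one_lt.ne') hnorm)

theorem padicNorm_harmonicBlock_le (hp5 : 5 ≤ p) (j : ℕ) :
    padicNorm p (harmonicBlock p j) ≤ (p : ℚ) ^ (-2 : ℤ) := by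
  let b : ℕ → ℤ := fun r => (j * p + r) * ((j + 1) * p - r)
  have hb : ∀ r, (b r : ZMod p) = -((r : ZMod p) ^ 2) := by
    intro r
    simp only [b]
    push_cast
    rw [ZMod.natCast_self]
    ring
  have hT : padicNorm p (∑ r ∈ Ico 1 p, (b r : ℚ)⁻¹) ≤ (p : ℚ) ^ (-1 : ℤ) :=
    padicNorm_sum_inv_le (Ico 1 p) b
      (fun r hr => by rw [hb, neg_ne_zero]; exact pow_ne_zero 2 (natCast_ne_zero_of_mem_Ico hr))
      (by simp only [hb, inv_neg, sum_neg_distrib, sum_Ico_one_inv_sq_eq_zero hp5, neg_zero])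
  have h2 : padicNorm p 2 = 1 := by
    exact_mod_cast (padicNorm.nat_eq_one_iff 2).2 (Nat.not_dvd_of_pos_of_lt two_pos (by omega))
  have hodd : padicNorm p (2 * j + 1) ≤ 1 := by exact_mod_cast padicNorm.of_nat (2 * j + 1)
  calc padicNorm p (harmonicBlock p j)
      = padicNorm p (2 * harmonicBlock p j) := by rw [padicNorm.mul, h2, one_mul]
    _ = (p : ℚ) ^ (-1 : ℤ) * padicNorm p (2 * j + 1) *
          padicNorm p (∑ r ∈ Ico 1 p, (b r : ℚ)⁻¹) := by
        rw [two_mul_harmonicBlock, padicNorm.mul, padicNorm.mul, padicNorm.padicNorm_p_of_prime,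
          zpow_neg_one]
    _ ≤ (p : ℚ) ^ (-1 : ℤ) * 1 * (p : ℚ) ^ (-1 : ℤ) := by gcongr; exact padicNorm.nonneg _
    _ = (p : ℚ) ^ (-2 : ℤ) := by
        rw [mul_one, ← zpow_add₀ (by exact_mod_cast (Fact.out : p.Prime).ne_zero)]
        norm_num

end Padic

theorem stmt_2 (p : ℕ) (hp : p.Prime) (hp5 : 5 ≤ p) (n : ℕ) (hn : 1 ≤ n)
    (hval : padicValRat p (H n) ≤ 2) :
    padicValRat p (H (p * n)) = padicValRat p (H n) - 1 := by
  have := Fact.mk hp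
  rw [H_eq_harmonic] at hval ⊢
  have hpQ : (p : ℚ) ≠ 0 := by exact_mod_cast hp.ne_zero
  have hHn : harmonic n ≠ 0 := (harmonic_pos (by omega)).ne'
  have hhead : (p : ℚ)⁻¹ * harmonic n ≠ 0 := mul_ne_zero (inv_ne_zero hpQ) hHn
  have hval_head :
      padicValRat p ((p : ℚ)⁻¹ * harmonic n) = padicValRat p (harmonic n) - 1 := by
    rw [padicValRat.mul (inv_ne_zero hpQ) hHn, padicValRat.inv, padicValRat.self hp.one_lt]
    ring
  rw [harmonic_mul_eq, padicValRat_add_eq_left hhead, hval_head]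
  calc padicNorm p (∑ j ∈ range n, harmonicBlock p j)
      ≤ (p : ℚ) ^ (-2 : ℤ) :=
        padicNorm.sum_le' (fun j _ => padicNorm_harmonicBlock_le hp5 j) (by positivity)
    _ < (p : ℚ) ^ (-padicValRat p ((p : ℚ)⁻¹ * harmonic n)) :=
        zpow_lt_zpow_right₀ (by exact_mod_cast hp.one_lt) (by omega)
    _ = padicNorm p ((p : ℚ)⁻¹ * harmonic n) := (padicNorm.eq_zpow_of_nonzero hhead).symm
end

section
/- For any prime p ≥ 5 and any integer n ≥ 1, ν_p(H(pn) − H(n)/p) ≥ 2, where H denotes the harmonic number. -/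
open Finset

lemma H_mul_sub_H_div (p n : ℕ) (hp : 0 < p) :
    H (p * n) - H n / p = ∑ j ∈ range n, ∑ i ∈ range (p - 1), (1 : ℚ) / (j * p + i + 1) := by
  induction n with
  | zero => simp [H]
  | succ n ih =>
    have hblock : H (p * (n + 1)) = H (p * n) + ∑ i ∈ range p, (1 : ℚ) / (n * p + i + 1) := by
      simp only [H, mul_add_one, sum_range_add]
      congr 1
      refine sum_congr rfl fun i _ => ?_
      push_cast
      ring_nf
    have hlast : ∑ i ∈ range p, (1 : ℚ) / (n * p + i + 1)
        = ∑ i ∈ range (p - 1), (1 : ℚ) / (n * p + i + 1) + 1 / (n + 1) / p := by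
      obtain ⟨q, rfl⟩ : ∃ q, p = q + 1 := ⟨p - 1, by omega⟩
      rw [sum_range_succ, Nat.add_sub_cancel, div_div]
      push_cast
      ring_nf
    have hsucc : H (n + 1) = H n + 1 / (n + 1) := sum_range_succ _ n
    rw [hblock, hlast, hsucc, sum_range_succ, ← ih]
    ring

def pairDen (p : ℕ) (x : ℕ × ℕ) : ℤ := (x.1 * p + x.2 + 1) * ((x.1 + 1) * p - (x.2 + 1))

lemma two_mul_sum_block (p j : ℕ) :
    2 * ∑ i ∈ range (p - 1), (1 : ℚ) / (j * p + i + 1)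
      = p * ∑ i ∈ range (p - 1), ((2 * j + 1 : ℤ) : ℚ) / pairDen p (j, i) := by
  conv_lhs => rw [two_mul]; arg 2; rw [← sum_range_reflect]
  rw [← sum_add_distrib, mul_sum]
  refine sum_congr rfl fun i hi => ?_
  have hi : i + 1 < p := by have := mem_range.mp hi; omega
  have hrefl : ((p - 1 - 1 - i : ℕ) : ℚ) = p - 2 - i := by
    rw [Nat.cast_sub (by omega), Nat.cast_sub (by omega), Nat.cast_sub (by omega)]; ring
  have hi' : (i : ℚ) + 1 < p := by exact_mod_cast hi
  have hj : (0 : ℚ) ≤ j := Nat.cast_nonneg j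
  have h1 : (j * p + i + 1 : ℚ) ≠ 0 := by positivity
  have h2 : ((j + 1) * p - (i + 1) : ℚ) ≠ 0 := by nlinarith
  rw [hrefl, show (j * p + (p - 2 - i) + 1 : ℚ) = (j + 1) * p - (i + 1) by ring, pairDen]
  push_cast
  rw [div_add_div _ _ h1 h2, ← mul_div_assoc]
  ring

lemma pairDen_cast {p : ℕ} (x : ℕ × ℕ) :
    (pairDen p x : ZMod p) = -((x.2 + 1 : ℕ) : ZMod p) ^ 2 := by
  simp [pairDen]
  ring

section
variable {p : ℕ} [Fact p.Prime]

lemma exists_sum_int_div_eq {ι : Type*} (s : Finset ι) (a b : ι → ℤ)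
    (hb : ∀ i ∈ s, (b i : ZMod p) ≠ 0) :
    ∃ N D : ℤ, (D : ZMod p) ≠ 0 ∧ ∑ i ∈ s, (a i : ℚ) / b i = N / D ∧
      ∑ i ∈ s, (a i : ZMod p) / b i = N / D := by
  classical
  induction s using Finset.induction_on with
  | empty => exact ⟨0, 1, by simp, by simp, by simp⟩
  | insert k s hk ih =>
    obtain ⟨N, D, hD, hQ, hZ⟩ := ih fun i hi => hb i (mem_insert_of_mem hi)
    have hbk : (b k : ZMod p) ≠ 0 := hb k (mem_insert_self k s)
    have hbkQ : (b k : ℚ) ≠ 0 := by exact_mod_cast fun h => hbk (by simp [h])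
    have hDQ : (D : ℚ) ≠ 0 := by exact_mod_cast fun h => hD (by simp [h])
    refine ⟨a k * D + b k * N, b k * D, by simpa using mul_ne_zero hbk hD, ?_, ?_⟩
    · rw [sum_insert hk, hQ]
      push_cast
      field_simp
    · rw [sum_insert hk, hZ]
      push_cast
      field_simp

lemma sum_int_div_eq_zero_or_one_le_padicValRat {ι : Type*} (s : Finset ι) (a b : ι → ℤ)
    (hb : ∀ i ∈ s, (b i : ZMod p) ≠ 0) (hsum : ∑ i ∈ s, (a i : ZMod p) / b i = 0) :
    ∑ i ∈ s, (a i : ℚ) / b i = 0 ∨ 1 ≤ padicValRat p (∑ i ∈ s, (a i : ℚ) / b i) := by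
  obtain ⟨N, D, hD, hQ, hZ⟩ := exists_sum_int_div_eq s a b hb
  rw [hQ]
  rcases eq_or_ne N 0 with hN | hN
  · simp [hN]
  right
  have hpN : (p : ℤ) ∣ N := by
    rw [← ZMod.intCast_zmod_eq_zero_iff_dvd]
    simpa [hsum, hD] using hZ.symm
  have hpD : ¬ (p : ℤ) ∣ D := by rwa [← ZMod.intCast_zmod_eq_zero_iff_dvd]
  have hDQ : (D : ℚ) ≠ 0 := by exact_mod_cast fun h => hD (by simp [h])
  rw [padicValRat.div (by exact_mod_cast hN) hDQ, padicValRat.of_int, padicValRat.of_int,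
    padicValInt.eq_zero_of_not_dvd hpD, Nat.cast_zero, sub_zero]
  exact_mod_cast (padicValInt_dvd_iff 1 N).mp (by simpa using hpN) |>.resolve_left hN

lemma sum_range_inv_sq_eq_zero (hp : 3 < p) :
    ∑ i ∈ range (p - 1), (((i + 1 : ℕ) : ZMod p) ^ 2)⁻¹ = 0 := by
  obtain ⟨q, rfl⟩ : ∃ q, p = q + 1 := ⟨p - 1, by omega⟩
  calc ∑ i ∈ range (q + 1 - 1), (((i + 1 : ℕ) : ZMod (q + 1)) ^ 2)⁻¹
      = ∑ r ∈ range (q + 1), (((r : ℕ) : ZMod (q + 1)) ^ 2)⁻¹ := by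
        simp [sum_range_succ']
    _ = ∑ x : ZMod (q + 1), (x ^ 2)⁻¹ :=
        sum_nbij' (↑) ZMod.val (fun _ _ => mem_univ _) (fun x _ => mem_range.mpr (ZMod.val_lt x))
          (fun r hr => ZMod.val_cast_of_lt (mem_range.mp hr)) (fun x _ => ZMod.natCast_zmod_val x)
          (fun _ _ => rfl)
    _ = ∑ x : ZMod (q + 1), x ^ 2 := by
        simp_rw [← inv_pow]
        exact Equiv.sum_comp (Equiv.inv _) (· ^ 2)
    _ = 0 := FiniteField.sum_pow_lt_card_sub_one _ 2 (by rw [ZMod.card]; omega)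

lemma pairDen_cast_ne_zero {x : ℕ × ℕ} (hx : x.2 < p - 1) : (pairDen p x : ZMod p) ≠ 0 := by
  rw [pairDen_cast, neg_ne_zero, pow_ne_zero_iff two_ne_zero, ne_eq,
    ZMod.natCast_eq_zero_iff]
  exact Nat.not_dvd_of_pos_of_lt (by omega) (by omega)

lemma sum_pairDen_cast_eq_zero (hp : 3 < p) (n : ℕ) :
    ∑ x ∈ range n ×ˢ range (p - 1), ((2 * x.1 + 1 : ℤ) : ZMod p) / pairDen p x = 0 := by
  simp_rw [sum_product, pairDen_cast, div_neg, sum_neg_distrib, div_eq_mul_inv, ← mul_sum,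
    sum_range_inv_sq_eq_zero hp]
  simp

end

theorem stmt_3_general (p : ℕ) (hp : p.Prime) (hp5 : 5 ≤ p) (n : ℕ) :
    H (p * n) - H n / p = 0 ∨ 2 ≤ padicValRat p (H (p * n) - H n / p) := by
  have : Fact p.Prime := ⟨hp⟩
  set T := ∑ x ∈ range n ×ˢ range (p - 1), ((2 * x.1 + 1 : ℤ) : ℚ) / pairDen p x with hT_def
  have hpaired : 2 * (H (p * n) - H n / p) = p * T := by
    rw [H_mul_sub_H_div p n hp.pos, mul_sum, hT_def, sum_product, mul_sum]
    exact sum_congr rfl fun j _ => two_mul_sum_block p j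
  have hT : T = 0 ∨ 1 ≤ padicValRat p T := sum_int_div_eq_zero_or_one_le_padicValRat _ _ _
    (fun x hx => pairDen_cast_ne_zero (mem_range.mp (mem_product.mp hx).2))
    (sum_pairDen_cast_eq_zero (by omega) n)
  rcases eq_or_ne T 0 with hT0 | hT0
  · left
    simpa [hT0] using hpaired
  right
  have hp0 : (p : ℚ) ≠ 0 := by exact_mod_cast hp.ne_zero
  have hX : H (p * n) - H n / p ≠ 0 := right_ne_zero_of_mul (hpaired ▸ mul_ne_zero hp0 hT0)
  have hv2 : padicValRat p 2 = 0 := by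
    have hndvd : ¬ p ∣ 2 := fun h => by have := Nat.le_of_dvd two_pos h; omega
    simpa [padicValNat.eq_zero_of_not_dvd hndvd] using padicValRat.of_nat (p := p) (n := 2)
  have hval := congrArg (padicValRat p) hpaired
  rw [padicValRat.mul two_ne_zero hX, padicValRat.mul hp0 hT0,
    padicValRat.self hp.one_lt, hv2] at hval
  have := hT.resolve_left hT0
  omega

theorem stmt_3 (p : ℕ) (hp : p.Prime) (hp5 : 5 ≤ p) (n : ℕ) (hn : 1 ≤ n) :
    H (p * n) - H n / p = 0 ∨ 2 ≤ padicValRat p (H (p * n) - H n / p) :=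
  stmt_3_general p hp hp5 n
end

section
/- Let p ≥ 5 be a prime and n ≥ 1 an integer such that ν_p(H(n)) ≥ 1 and ν_p(H(pn)) ≥ 0. Then for each k with 1 ≤ k ≤ p−1, ν_p( H(pn+k) − H(n)/p − H(k) ) ≥ 1. -/
lemma H_add (m k : ℕ) : H (m + k) = H m + ∑ j ∈ Finset.range k, ((m + j : ℕ) + 1 : ℚ)⁻¹ := by
  simp only [H, Finset.sum_range_add, one_div, Nat.cast_add]

lemma H_succ (m : ℕ) : H (m + 1) = H m + ((m : ℚ) + 1)⁻¹ := by
  simp only [H, Finset.sum_range_succ, one_div]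

namespace padicNorm

variable {p : ℕ} [hp : Fact p.Prime]

lemma add_le_of_le {q r c : ℚ} (hq : padicNorm p q ≤ c) (hr : padicNorm p r ≤ c) :
    padicNorm p (q + r) ≤ c :=
  padicNorm.nonarchimedean.trans (max_le hq hr)

lemma inv_add_sub_inv_le {a b : ℚ} (ha : padicNorm p a ≤ 1) (hb : padicNorm p b = 1) :
    padicNorm p ((p * a + b)⁻¹ - b⁻¹) ≤ (p : ℚ)⁻¹ := by
  have hb0 : b ≠ 0 := fun h => by simp [h] at hb
  have hpa : padicNorm p (p * a) < 1 := by
    rw [padicNorm.mul, padicNorm_p_of_prime]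
    calc (p : ℚ)⁻¹ * padicNorm p a ≤ (p : ℚ)⁻¹ * 1 := by gcongr
      _ < 1 := by rw [mul_one]; exact inv_lt_one_of_one_lt₀ (by exact_mod_cast hp.out.one_lt)
  have hpab : padicNorm p (p * a + b) = 1 := by
    rw [add_eq_max_of_ne (hb ▸ hpa.ne), hb, max_eq_right hpa.le]
  have hpab0 : p * a + b ≠ 0 := fun h => by simp [h] at hpab
  have key : (p * a + b)⁻¹ - b⁻¹ = -(p * a) / ((p * a + b) * b) := by
    field_simp
    ring
  rw [key, padicNorm.div, padicNorm.neg, padicNorm.mul, padicNorm.mul, hpab, hb,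
    padicNorm_p_of_prime]
  simpa using mul_le_mul_of_nonneg_left ha (by positivity : (0 : ℚ) ≤ (p : ℚ)⁻¹)

end padicNorm

section

variable {p : ℕ} [hp : Fact p.Prime]

lemma padicNorm_natCast_eq_one {m : ℕ} (hm0 : 0 < m) (hmp : m < p) : padicNorm p (m : ℚ) = 1 :=
  (padicNorm.nat_eq_one_iff m).mpr (Nat.not_dvd_of_pos_of_lt hm0 hmp)

lemma padicNorm_H_add_sub_le (a : ℕ) {k : ℕ} (hk : k < p) :
    padicNorm p (H (p * a + k) - H (p * a) - H k) ≤ (p : ℚ)⁻¹ := by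
  have hsum : H (p * a + k) - H (p * a) - H k
      = ∑ j ∈ Finset.range k, ((p * a + ((j + 1 : ℕ) : ℚ))⁻¹ - ((j + 1 : ℕ) : ℚ)⁻¹) := by
    rw [H_add, add_sub_cancel_left, H, ← Finset.sum_sub_distrib]
    refine Finset.sum_congr rfl fun j _ => ?_
    push_cast
    ring
  rw [hsum]
  refine padicNorm.sum_le' (fun j hj => ?_) (by positivity)
  exact padicNorm.inv_add_sub_inv_le (padicNorm.of_nat a)
    (padicNorm_natCast_eq_one j.succ_pos (by have := Finset.mem_range.mp hj; omega))

/- The terms `1/i` and `1/(p - i)` of `H (p - 1)` pair off into multiples of `p`; the pairing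
counts every term twice, hence `p ≠ 2`. -/
lemma padicNorm_H_pred_le (hp2 : p ≠ 2) : padicNorm p (H (p - 1)) ≤ (p : ℚ)⁻¹ := by
  have hreflect : ∑ j ∈ Finset.range (p - 1), ((p : ℚ) - ((j + 1 : ℕ) : ℚ))⁻¹ = H (p - 1) := by
    rw [H, ← Finset.sum_range_reflect]
    refine Finset.sum_congr rfl fun j hj => ?_
    rw [Finset.mem_range] at hj
    rw [show p - 1 - 1 - j + 1 = p - (j + 1) by omega, Nat.cast_sub (by omega), sub_sub_cancel]
    push_cast
    rw [one_div]
  have h2 : padicNorm p (2 : ℚ) = 1 := by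
    exact_mod_cast (padicNorm.nat_eq_one_iff 2).mpr
      fun h => hp2 ((Nat.prime_dvd_prime_iff_eq hp.out Nat.prime_two).mp h)
  have htwice : padicNorm p (2 * H (p - 1)) ≤ (p : ℚ)⁻¹ := by
    rw [two_mul]
    nth_rw 2 [← hreflect]
    rw [H, ← Finset.sum_add_distrib]
    refine padicNorm.sum_le' (fun j hj => ?_) (by positivity)
    rw [Finset.mem_range] at hj
    have hpair : (1 : ℚ) / (j + 1) + ((p : ℚ) - ((j + 1 : ℕ) : ℚ))⁻¹
        = -((p * (-1) + ((j + 1 : ℕ) : ℚ))⁻¹ - ((j + 1 : ℕ) : ℚ)⁻¹) := by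
      rw [show (p : ℚ) * (-1) + ((j + 1 : ℕ) : ℚ) = -(p - ((j + 1 : ℕ) : ℚ)) by ring, inv_neg]
      push_cast
      ring
    rw [hpair, padicNorm.neg]
    exact padicNorm.inv_add_sub_inv_le (by simp) (padicNorm_natCast_eq_one j.succ_pos (by omega))
  rwa [padicNorm.mul, h2, one_mul] at htwice

lemma padicNorm_H_mul_sub_le (hp2 : p ≠ 2) (n : ℕ) :
    padicNorm p (H (p * n) - H n / p) ≤ (p : ℚ)⁻¹ := by
  induction n with
  | zero => simp [H]
  | succ n ih =>
    have hp1 : p - 1 < p := Nat.sub_lt hp.out.pos one_pos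
    have hstep : H (p * (n + 1)) - H (n + 1) / p
        = (H (p * n + (p - 1)) - H (p * n) - H (p - 1)) + H (p - 1) + (H (p * n) - H n / p) := by
      have hsucc : p * (n + 1) = p * n + (p - 1) + 1 := by
        have := hp.out.pos
        rw [Nat.mul_succ]; omega
      have hcast : ((p * n + (p - 1) : ℕ) : ℚ) + 1 = p * (n + 1) := by
        rw [Nat.cast_add, Nat.cast_sub hp.out.one_le]; push_cast; ring
      have : (p : ℚ) ≠ 0 := by exact_mod_cast hp.out.ne_zero
      rw [hsucc, H_succ, H_succ, hcast]
      field_simp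
      ring
    rw [hstep]
    exact padicNorm.add_le_of_le
      (padicNorm.add_le_of_le (padicNorm_H_add_sub_le n hp1) (padicNorm_H_pred_le hp2)) ih

lemma eq_zero_or_one_le_padicValRat_of_padicNorm_le {x : ℚ} (hx : padicNorm p x ≤ (p : ℚ)⁻¹) :
    x = 0 ∨ 1 ≤ padicValRat p x := by
  refine or_iff_not_imp_left.mpr fun hx0 => ?_
  rw [padicNorm.eq_zpow_of_nonzero hx0, ← zpow_neg_one] at hx
  have := (zpow_le_zpow_iff_right₀ (by exact_mod_cast hp.out.one_lt : (1 : ℚ) < p)).mp hx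
  omega

end

theorem stmt_5_general (p : ℕ) (hp : p.Prime) (hp5 : 5 ≤ p) (n : ℕ)
    (k : ℕ) (hk2 : k ≤ p - 1) :
    H (p * n + k) - H n / p - H k = 0 ∨
      1 ≤ padicValRat p (H (p * n + k) - H n / p - H k) := by
  have : Fact p.Prime := ⟨hp⟩
  have hsplit : H (p * n + k) - H n / p - H k
      = (H (p * n + k) - H (p * n) - H k) + (H (p * n) - H n / p) := by ring
  rw [hsplit]
  exact eq_zero_or_one_le_padicValRat_of_padicNorm_le <| padicNorm.add_le_of_le
    (padicNorm_H_add_sub_le n (by omega)) (padicNorm_H_mul_sub_le (by omega) n)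

theorem stmt_5 (p : ℕ) (hp : p.Prime) (hp5 : 5 ≤ p) (n : ℕ) (hn : 1 ≤ n)
    (h1 : 1 ≤ padicValRat p (H n)) (h2 : 0 ≤ padicValRat p (H (p * n)))
    (k : ℕ) (hk1 : 1 ≤ k) (hk2 : k ≤ p - 1) :
    H (p * n + k) - H n / p - H k = 0 ∨
      1 ≤ padicValRat p (H (p * n + k) - H n / p - H k) :=
  stmt_5_general p hp hp5 n k hk2
end

section
/- The set of positive integers n such that 3 divides the numerator of the harmonic number H(n) is exactly {2, 7, 22}. -/
/-!
Splitting `H (3m + r)` into the terms with index divisible by 3 and the rest gives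
`H (3m + r) = (H m / 3 + ∑_{j<r} 1/(3m+j+1)) + ∑_{k<m} (1/(3k+1) + 1/(3k+2))`,
and each pair in the last sum equals `3(2k+1)/((3k+1)(3k+2))`, so that sum has 3-adic norm `< 1`.
Hence `ν₃(H (3m + r)) ≥ 1` iff `ν₃(H m / 3 + ∑_{j<r} 1/(3m+j+1)) ≥ 1`. For `r < 3` the tail is a
3-adic integer, so this forces `ν₃(H m) ≥ 1`: the exceptional set is closed under `n ↦ n / 3`.
Among `n < 3` only `2` qualifies, and computing `H 2`, `H 7`, `H 22` shows that the only children
`3m + r` of `m ∈ {2, 7, 22}` that qualify are `7 = 3·2 + 1` and `22 = 3·7 + 1`.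
-/

open Finset

section padicNorm

variable {p : ℕ} [hp : Fact p.Prime]

lemma padicNorm_div_natCast_of_not_dvd (q : ℚ) {b : ℕ} (hb : ¬ p ∣ b) :
    padicNorm p (q / b) = padicNorm p q := by
  rw [padicNorm.div, (padicNorm.nat_eq_one_iff b).2 hb, div_one]

lemma padicNorm_lt_one_iff_dvd_num (q : ℚ) : padicNorm p q < 1 ↔ (p : ℤ) ∣ q.num := by
  conv_lhs => rw [← Rat.num_div_den q]
  by_cases hnum : (p : ℤ) ∣ q.num
  · have hden : ¬ p ∣ q.den := fun hden ↦ hp.out.one_lt.ne'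
      (Nat.eq_one_of_dvd_one (q.reduced.gcd_eq_one ▸ Nat.dvd_gcd (Int.natCast_dvd.1 hnum) hden))
    rw [padicNorm_div_natCast_of_not_dvd _ hden, padicNorm.int_lt_one_iff]
  · have hden : 0 < padicNorm p q.den :=
      lt_of_le_of_ne (padicNorm.nonneg _) (padicNorm.nonzero (by simp)).symm
    rw [padicNorm.div, (padicNorm.int_eq_one_iff _).2 hnum]
    exact iff_of_false (not_lt.2 (one_le_one_div hden (padicNorm.of_nat _))) hnum

lemma one_le_padicValRat_iff_padicNorm_lt_one {q : ℚ} (hq : q ≠ 0) :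
    1 ≤ padicValRat p q ↔ padicNorm p q < 1 := by
  rw [padicNorm.eq_zpow_of_nonzero hq, zpow_lt_one_iff_right₀ (by exact_mod_cast hp.out.one_lt)]
  omega

lemma padicNorm_add_lt_one_iff_left {a b : ℚ} (hb : padicNorm p b < 1) :
    padicNorm p (a + b) < 1 ↔ padicNorm p a < 1 := by
  constructor
  · intro hab
    simpa using lt_of_le_of_lt (padicNorm.sub (q := a + b) (r := b)) (max_lt hab hb)
  · exact fun ha ↦ lt_of_le_of_lt padicNorm.nonarchimedean (max_lt ha hb)

end padicNorm

lemma H_zero : H 0 = 0 := by simp [H]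

lemma H_succ_s12 (n : ℕ) : H (n + 1) = H n + 1 / (n + 1) := sum_range_succ _ _

lemma H_pos {n : ℕ} (hn : 1 ≤ n) : 0 < H n :=
  sum_pos (fun _ _ ↦ by positivity) ⟨0, mem_range.2 hn⟩

lemma H_three_mul (m : ℕ) :
    H (3 * m) = H m / 3 + ∑ k ∈ range m, (1 / (3 * k + 1) + 1 / (3 * k + 2) : ℚ) := by
  induction m with
  | zero => simp [H]
  | succ m ih =>
    rw [show 3 * (m + 1) = 3 * m + 2 + 1 by ring, H_succ_s12, H_succ_s12, H_succ_s12, ih, H_succ_s12 m,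
      sum_range_succ]
    push_cast
    field_simp
    ring

lemma H_three_mul_add (m r : ℕ) :
    H (3 * m + r) = (H m / 3 + ∑ j ∈ range r, 1 / (3 * m + j + 1 : ℚ)) +
      ∑ k ∈ range m, (1 / (3 * k + 1) + 1 / (3 * k + 2) : ℚ) := by
  induction r with
  | zero => simp [H_three_mul]
  | succ r ih =>
    rw [← add_assoc, H_succ_s12, ih, sum_range_succ]
    push_cast
    ring

lemma padicNorm_sum_inv_pairs_lt_one (m : ℕ) :
    padicNorm 3 (∑ k ∈ range m, (1 / (3 * k + 1) + 1 / (3 * k + 2) : ℚ)) < 1 := by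
  refine padicNorm.sum_lt' (fun k _ ↦ ?_) one_pos
  have hpair : (1 / (3 * k + 1) + 1 / (3 * k + 2) : ℚ) =
      ((3 * (2 * k + 1) : ℕ) : ℚ) / ((3 * k + 1) * (3 * k + 2) : ℕ) := by
    push_cast
    field_simp
    ring
  have hden : ¬ 3 ∣ (3 * k + 1) * (3 * k + 2) := by
    rw [Nat.prime_three.dvd_mul]
    omega
  rw [hpair, padicNorm_div_natCast_of_not_dvd _ hden, padicNorm.nat_lt_one_iff]
  exact dvd_mul_right 3 _

lemma padicNorm_H_three_mul_add_lt_one_iff (m r : ℕ) :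
    padicNorm 3 (H (3 * m + r)) < 1 ↔
      padicNorm 3 (H m / 3 + ∑ j ∈ range r, 1 / (3 * m + j + 1 : ℚ)) < 1 := by
  rw [H_three_mul_add]
  exact padicNorm_add_lt_one_iff_left (padicNorm_sum_inv_pairs_lt_one m)

lemma padicNorm_H_lt_one_of_three_mul_add {m r : ℕ} (hr : r < 3)
    (h : padicNorm 3 (H (3 * m + r)) < 1) : padicNorm 3 (H m) < 1 := by
  rw [padicNorm_H_three_mul_add_lt_one_iff] at h
  have htail : padicNorm 3 (∑ j ∈ range r, 1 / (3 * m + j + 1 : ℚ)) ≤ 1 := by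
    refine padicNorm.sum_le' (fun j hj ↦ ?_) zero_le_one
    have hj : ¬ 3 ∣ 3 * m + j + 1 := by
      have := mem_range.1 hj
      omega
    have := padicNorm_div_natCast_of_not_dvd 1 hj
    push_cast at this
    rw [this, padicNorm.one]
  have hthird : padicNorm 3 (H m / 3) ≤ 1 := by
    have := padicNorm.sub (p := 3) (q := H m / 3 + ∑ j ∈ range r, 1 / (3 * m + j + 1 : ℚ))
      (r := ∑ j ∈ range r, 1 / (3 * m + j + 1 : ℚ))
    rw [add_sub_cancel_right] at this
    exact this.trans (max_le h.le htail)
  have hthree : padicNorm 3 (3 : ℚ) = 3⁻¹ := by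
    exact_mod_cast padicNorm.padicNorm_p_of_prime (p := 3)
  calc padicNorm 3 (H m) = padicNorm 3 3 * padicNorm 3 (H m / 3) := by
        rw [← padicNorm.mul, mul_div_cancel₀ _ three_ne_zero]
    _ ≤ 3⁻¹ * 1 := by
        rw [hthree]
        gcongr
    _ < 1 := by norm_num

lemma H_two : H 2 = 3 / 2 := by norm_num [H, sum_range_succ]

lemma H_seven : H 7 = 363 / 140 := by norm_num [H, sum_range_succ]

lemma H_twentyTwo : H 22 = 19093197 / 5173168 := by norm_num [H, sum_range_succ]

lemma padicNorm_H_lt_one_iff (n : ℕ) :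
    padicNorm 3 (H n) < 1 ↔ n = 0 ∨ n = 2 ∨ n = 7 ∨ n = 22 := by
  constructor
  · intro h
    induction n using Nat.strong_induction_on with
    | _ n ih =>
    have hr : n % 3 < 3 := Nat.mod_lt n three_pos
    have hm : n / 3 = 0 ∨ n / 3 = 2 ∨ n / 3 = 7 ∨ n / 3 = 22 := by
      rcases Nat.eq_zero_or_pos (n / 3) with h0 | hpos
      · exact Or.inl h0
      · refine ih (n / 3) (by omega) (padicNorm_H_lt_one_of_three_mul_add hr ?_)
        rwa [Nat.div_add_mod]
    rw [← Nat.div_add_mod n 3] at h ⊢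
    rw [padicNorm_H_three_mul_add_lt_one_iff, padicNorm_lt_one_iff_dvd_num] at h
    clear ih
    generalize n / 3 = m, n % 3 = r at *
    interval_cases r <;> rcases hm with rfl | rfl | rfl | rfl <;>
      norm_num [H_zero, H_two, H_seven, H_twentyTwo, sum_range_succ, Rat.num_div_eq_of_coprime]
        at h <;> norm_num
  · rintro (rfl | rfl | rfl | rfl) <;> rw [padicNorm_lt_one_iff_dvd_num] <;>
      norm_num [H_zero, H_two, H_seven, H_twentyTwo, Rat.num_div_eq_of_coprime]

theorem stmt_12 :
    {n : ℕ | 1 ≤ n ∧ 1 ≤ padicValRat 3 (H n)} = {2, 7, 22} := by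
  ext n
  simp only [Set.mem_ofPred_eq, Set.mem_insert_iff, Set.mem_singleton_iff]
  constructor
  · rintro ⟨hn, hv⟩
    rw [one_le_padicValRat_iff_padicNorm_lt_one (H_pos hn).ne', padicNorm_H_lt_one_iff] at hv
    omega
  · intro hn
    have hn1 : 1 ≤ n := by omega
    rw [one_le_padicValRat_iff_padicNorm_lt_one (H_pos hn1).ne', padicNorm_H_lt_one_iff]
    omega
end

section
/- Let p ≥ 5 be a prime. Then p divides the numerator of the Bernoulli number B_{p−3} (i.e. ν_p(B_{p−3}) ≥ 1) if and only if ν_p(H(p−1)) ≥ 3. -/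
open Finset
set_option linter.unusedSectionVars false
set_option linter.unusedVariables false
set_option linter.unusedTactic false
set_option maxHeartbeats 1000000

namespace Wolst
variable {p : ℕ} [hp : Fact p.Prime]

lemma ppos : (0:ℝ) < p := by exact_mod_cast hp.out.pos
lemma pone : (1:ℝ) < p := by exact_mod_cast hp.out.one_lt

lemma norm_natCast (j : ℕ) (hj : j ≠ 0) :
    ‖((j:ℚ) : ℚ_[p])‖ = (p:ℝ)^(-(padicValNat p j : ℤ)) := by
  rw [show ((j:ℚ) : ℚ_[p]) = (j : ℚ_[p]) by push_cast; ring]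
  rw [Padic.norm_eq_zpow_neg_valuation (by exact_mod_cast hj), Padic.valuation_natCast]

lemma norm_int_le_one (z : ℤ) : ‖((z:ℚ) : ℚ_[p])‖ ≤ 1 := by
  rw [show ((z:ℚ) : ℚ_[p]) = (z : ℚ_[p]) by push_cast; ring]
  exact Padic.norm_int_le_one _

lemma norm_nat_le_one (n : ℕ) : ‖((n:ℚ) : ℚ_[p])‖ ≤ 1 := by
  simpa using norm_int_le_one (p := p) (n : ℤ)

lemma norm_nat_eq_one (n : ℕ) (hn : ¬ p ∣ n) : ‖((n:ℚ) : ℚ_[p])‖ = 1 := by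
  have h1 := norm_nat_le_one (p := p) n
  have h2 : ¬ ‖((n:ℚ) : ℚ_[p])‖ < 1 := by
    rw [show ((n:ℚ) : ℚ_[p]) = ((n:ℤ) : ℚ_[p]) by push_cast; ring]
    rw [Padic.norm_intCast_lt_one_iff]
    exact_mod_cast hn
  linarith [lt_or_eq_of_le h1, h2]

lemma norm_int_le_pow (z : ℤ) (n : ℕ) (h : (p:ℤ)^n ∣ z) :
    ‖((z:ℚ) : ℚ_[p])‖ ≤ (p:ℝ)^(-(n:ℤ)) := by
  rw [show ((z:ℚ) : ℚ_[p]) = (z : ℚ_[p]) by push_cast; ring]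
  exact (Padic.norm_int_le_pow_iff_dvd z n).mpr h

lemma norm_p_pow (t : ℕ) : ‖(((p:ℚ)^t : ℚ) : ℚ_[p])‖ = (p:ℝ)^(-(t:ℤ)) := by
  push_cast
  rw [norm_pow, Padic.norm_p]
  rw [inv_pow, ← zpow_natCast, ← zpow_neg]

lemma val_nat_le_one (j : ℕ) (hj : j ≠ 0) : padicValNat p j + 1 ≤ j := by
  have h2 : p ^ (padicValNat p j) ≤ j :=
    Nat.le_of_dvd (Nat.pos_of_ne_zero hj) pow_padicValNat_dvd
  have h3 : padicValNat p j < p ^ (padicValNat p j) :=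
    Nat.lt_pow_self hp.out.one_lt
  omega

lemma aux5 (v : ℕ) : 4*v+1 ≤ 5^v := by
  induction v with
  | zero => simp
  | succ n ih =>
    have : 5^(n+1) = 5*5^n := by ring
    have h5 : (1:ℕ) ≤ 5^n := Nat.one_le_pow _ _ (by norm_num)
    omega

lemma val_nat_le4 (hp5 : 5 ≤ p) (j : ℕ) (hj : j ≠ 0) (h1 : 1 ≤ padicValNat p j) :
    padicValNat p j + 4 ≤ j := by
  set v := padicValNat p j with hv
  have h2 : p ^ v ≤ j := Nat.le_of_dvd (Nat.pos_of_ne_zero hj) pow_padicValNat_dvd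
  have h3 : 5^v ≤ p^v := Nat.pow_le_pow_left hp5 _
  have h4 : 4*v+1 ≤ 5^v := aux5 v
  omega

/-- key ultrametric transfer -/
lemma norm_le_iff_close (x y : ℚ_[p]) (c : ℝ) (h : ‖x - y‖ ≤ c) : ‖x‖ ≤ c ↔ ‖y‖ ≤ c := by
  have h' : ‖y - x‖ ≤ c := by rwa [norm_sub_rev]
  constructor
  · intro hx
    calc ‖y‖ = ‖x + (y - x)‖ := by ring_nf
    _ ≤ max ‖x‖ ‖y-x‖ := Padic.nonarchimedean _ _
    _ ≤ c := max_le hx h'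
  · intro hy
    calc ‖x‖ = ‖y + (x - y)‖ := by ring_nf
    _ ≤ max ‖y‖ ‖x-y‖ := Padic.nonarchimedean _ _
    _ ≤ c := max_le hy h


lemma vrat (x : ℚ) (hx : x ≠ 0) (k : ℤ) :
    k ≤ padicValRat p x ↔ ‖(x : ℚ_[p])‖ ≤ (p:ℝ)^(-k) := by
  rw [Padic.norm_eq_zpow_neg_valuation (by exact_mod_cast hx), Padic.valuation_ratCast]
  rw [zpow_le_zpow_iff_right₀ (by exact_mod_cast hp.out.one_lt)]
  omega

lemma choose_id (m k : ℕ) (hk : k ≤ m) : (m+1).choose k * (m+1-k) = (m+1) * m.choose k := by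
  have h1 := Nat.add_one_mul_choose_eq m (m-k)
  rw [Nat.choose_symm hk] at h1
  rw [show m - k + 1 = m + 1 - k from by omega] at h1
  rw [show (m+1).choose (m+1-k) = (m+1).choose k from Nat.choose_symm (by omega)] at h1
  omega

lemma faul (m : ℕ) : (∑ i ∈ range p, (i:ℚ)^m)
    = ∑ k ∈ range (m+1), (m.choose k : ℚ) * bernoulli k * (p:ℚ)^(m+1-k) / ((m+1-k : ℕ) : ℚ) := by
  rw [sum_range_pow]
  refine sum_congr rfl fun k hk => ?_
  have hk' : k ≤ m := Nat.lt_succ_iff.mp (mem_range.mp hk)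
  have hch : (((m+1).choose k : ℕ) : ℚ) * ((m+1-k : ℕ) : ℚ) = ((m+1 : ℕ) : ℚ) * (m.choose k : ℕ) := by
    exact_mod_cast congrArg (Nat.cast : ℕ → ℚ) (choose_id m k hk')
  have h2 : ((m+1-k : ℕ) : ℚ) ≠ 0 := by
    have : 0 < m+1-k := by omega
    exact_mod_cast this.ne'
  have h1 : ((m:ℚ)+1) ≠ 0 := by positivity
  rw [div_eq_div_iff h1 h2]
  push_cast at hch ⊢
  linear_combination (bernoulli k * (p:ℚ)^(m+1-k)) * hch

-- the Faulhaber term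
noncomputable def T (p m k : ℕ) : ℚ :=
  (m.choose k : ℚ) * bernoulli k * (p:ℚ)^(m+1-k) / ((m+1-k : ℕ) : ℚ)

lemma term_norm (m k : ℕ) (hk : k ≤ m) :
    ‖((T p m k : ℚ) : ℚ_[p])‖
    ≤ ‖((bernoulli k : ℚ) : ℚ_[p])‖ * (p:ℝ)^((padicValNat p (m+1-k) : ℤ) - (m+1-k : ℕ)) := by
  have hj : m+1-k ≠ 0 := by omega
  rw [T, Rat.cast_div, Rat.cast_mul, Rat.cast_mul, norm_div, norm_mul, norm_mul,
      norm_natCast _ hj, norm_p_pow]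
  have hC := norm_nat_le_one (p := p) (m.choose k)
  have hBn : (0:ℝ) ≤ ‖((bernoulli k : ℚ) : ℚ_[p])‖ := norm_nonneg _
  have hxy : (p:ℝ)^(-((m+1-k:ℕ):ℤ)) / (p:ℝ)^(-(padicValNat p (m+1-k) : ℤ))
      = (p:ℝ)^((padicValNat p (m+1-k) : ℤ) - (m+1-k : ℕ)) := by
    rw [← zpow_sub₀ (ne_of_gt ppos)]
    ring_nf
  calc ‖((m.choose k : ℚ) : ℚ_[p])‖ * ‖((bernoulli k : ℚ) : ℚ_[p])‖ * (p:ℝ)^(-((m+1-k:ℕ):ℤ)) / (p:ℝ)^(-(padicValNat p (m+1-k) : ℤ))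
      = ‖((m.choose k : ℚ) : ℚ_[p])‖ * (‖((bernoulli k : ℚ) : ℚ_[p])‖ * ((p:ℝ)^(-((m+1-k:ℕ):ℤ)) / (p:ℝ)^(-(padicValNat p (m+1-k) : ℤ)))) := by ring
    _ ≤ 1 * (‖((bernoulli k : ℚ) : ℚ_[p])‖ * ((p:ℝ)^(-((m+1-k:ℕ):ℤ)) / (p:ℝ)^(-(padicValNat p (m+1-k) : ℤ)))) := by
        apply mul_le_mul_of_nonneg_right hC
        positivity
    _ = ‖((bernoulli k : ℚ) : ℚ_[p])‖ * (p:ℝ)^((padicValNat p (m+1-k) : ℤ) - (m+1-k : ℕ)) := by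
        rw [hxy]; ring

lemma term_norm' (m k : ℕ) (hk : k ≤ m) (c e : ℤ)
    (hB : ‖((bernoulli k : ℚ) : ℚ_[p])‖ ≤ (p:ℝ)^c)
    (he : c + (padicValNat p (m+1-k) : ℤ) ≤ e + ((m+1-k : ℕ) : ℤ)) :
    ‖((T p m k : ℚ) : ℚ_[p])‖ ≤ (p:ℝ)^e := by
  refine (term_norm m k hk).trans ?_
  calc ‖((bernoulli k : ℚ) : ℚ_[p])‖ * (p:ℝ)^((padicValNat p (m+1-k) : ℤ) - (m+1-k : ℕ))
      ≤ (p:ℝ)^c * (p:ℝ)^((padicValNat p (m+1-k) : ℤ) - (m+1-k : ℕ)) := by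
        apply mul_le_mul_of_nonneg_right hB (by positivity)
    _ = (p:ℝ)^(c + ((padicValNat p (m+1-k) : ℤ) - (m+1-k : ℕ))) := by
        rw [← zpow_add₀ (ne_of_gt ppos)]
    _ ≤ (p:ℝ)^e := by
        apply zpow_le_zpow_right₀ (le_of_lt pone)
        omega


lemma faulT (m : ℕ) : (∑ i ∈ range p, (i:ℚ)^m) = ∑ k ∈ range (m+1), T p m k := by
  simp only [T]
  exact faul m

lemma Tm_eq (m : ℕ) : T p m m = (p:ℚ) * bernoulli m := by
  rw [T, Nat.choose_self, Nat.add_sub_cancel_left]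
  norm_num
  ring

lemma pB_le_one (m : ℕ) : ‖(((p:ℚ) * bernoulli m : ℚ) : ℚ_[p])‖ ≤ 1 := by
  induction m using Nat.strong_induction_on with
  | _ m ih =>
    have hf := faulT (p := p) m
    rw [sum_range_succ, Tm_eq] at hf
    have key : ((p:ℚ) * bernoulli m : ℚ) = (((∑ i ∈ range p, (i:ℚ)^m) : ℚ))
        - ∑ k ∈ range m, T p m k := by linarith
    have key2 : ((p:ℚ) * bernoulli m : ℚ) = ((∑ i ∈ range p, (i:ℕ)^m : ℕ) : ℚ)
        - ∑ k ∈ range m, T p m k := by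
      have hnat : (∑ i ∈ range p, (i:ℚ)^m) = ((∑ i ∈ range p, (i:ℕ)^m : ℕ) : ℚ) := by
        push_cast; ring
      rw [key, hnat]
    have hsplit : (((p:ℚ) * bernoulli m : ℚ) : ℚ_[p])
        = (((∑ i ∈ range p, (i:ℕ)^m : ℕ) : ℚ) : ℚ_[p])
          - ∑ k ∈ range m, ((T p m k : ℚ) : ℚ_[p]) := by
      rw [key2]; push_cast; ring
    rw [hsplit, sub_eq_add_neg]
    refine le_trans (Padic.nonarchimedean _ _) (max_le ?_ ?_)
    · exact norm_nat_le_one _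
    · rw [norm_neg]
      apply IsUltrametricDist.norm_sum_le_of_forall_le_of_nonneg zero_le_one
      intro k hk
      have hk' : k < m := mem_range.mp hk
      have hB : ‖((bernoulli k : ℚ) : ℚ_[p])‖ ≤ (p:ℝ)^(1:ℤ) := by
        have h1 := ih k hk'
        have h2 : (((p:ℚ) * bernoulli k : ℚ) : ℚ_[p]) = (((p:ℚ)):ℚ_[p]) * ((bernoulli k : ℚ):ℚ_[p]) := by push_cast; ring
        rw [h2, norm_mul] at h1
        have h3 : ‖(((p:ℚ)) : ℚ_[p])‖ = (p:ℝ)⁻¹ := by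
          rw [show (((p:ℚ)) : ℚ_[p]) = ((p:ℕ) : ℚ_[p]) by push_cast; ring, Padic.norm_p]
        rw [h3] at h1
        have hppos := ppos (p := p) (hp := hp)
        rw [zpow_one]
        calc ‖((bernoulli k : ℚ) : ℚ_[p])‖ = ((p:ℝ)⁻¹ * ‖((bernoulli k : ℚ) : ℚ_[p])‖) * p := by
              field_simp
          _ ≤ 1 * p := by apply mul_le_mul_of_nonneg_right h1 (le_of_lt hppos)
          _ = p := one_mul _
      have := norm_nat_le_one (p := p)
      refine le_trans (term_norm' m k (le_of_lt hk') 1 0 hB ?_) (by norm_num)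
      have := val_nat_le_one (p := p) (m+1-k) (by omega)
      omega


lemma B_le_p (m : ℕ) : ‖((bernoulli m : ℚ) : ℚ_[p])‖ ≤ (p:ℝ)^(1:ℤ) := by
  have h1 := pB_le_one (p := p) m
  have h2 : (((p:ℚ) * bernoulli m : ℚ) : ℚ_[p])
      = (((p:ℚ)):ℚ_[p]) * ((bernoulli m : ℚ):ℚ_[p]) := by push_cast; ring
  rw [h2, norm_mul] at h1
  have h3 : ‖(((p:ℚ)) : ℚ_[p])‖ = (p:ℝ)⁻¹ := by
    rw [show (((p:ℚ)) : ℚ_[p]) = ((p:ℕ) : ℚ_[p]) by push_cast; ring, Padic.norm_p]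
  rw [h3] at h1
  have hppos := ppos (p := p) (hp := hp)
  rw [zpow_one]
  calc ‖((bernoulli m : ℚ) : ℚ_[p])‖
      = ((p:ℝ)⁻¹ * ‖((bernoulli m : ℚ) : ℚ_[p])‖) * p := by field_simp
    _ ≤ 1 * p := by apply mul_le_mul_of_nonneg_right h1 (le_of_lt hppos)
    _ = p := one_mul _

lemma pndvd (n : ℕ) (h0 : 0 < n) (hn : n < p) : ¬ p ∣ n :=
  fun hd => absurd (Nat.le_of_dvd h0 hd) (by omega)

lemma B_odd_le_one (hp2 : p ≠ 2) (k : ℕ) (hk : Odd k) :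
    ‖((bernoulli k : ℚ) : ℚ_[p])‖ ≤ 1 := by
  rcases eq_or_ne k 1 with rfl | h1
  · rw [bernoulli_one]
    have h2 : ((-1/2 : ℚ) : ℚ_[p]) = -(((2:ℕ):ℚ) : ℚ_[p])⁻¹ := by push_cast; ring
    rw [h2, norm_neg, norm_inv, norm_nat_eq_one 2 (pndvd 2 (by omega) (by have := hp.out.two_le; omega))]
    norm_num
  · have hz : bernoulli k = 0 := by
      rw [bernoulli_eq_bernoulli'_of_ne_one h1]
      rcases hk with ⟨t, ht⟩
      exact bernoulli'_eq_zero_of_odd ⟨t, ht⟩ (by omega)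
    simp [hz]

lemma vbound3 (hp5 : 5 ≤ p) (j : ℕ) (hj : 3 ≤ j) : (padicValNat p j : ℤ) + 3 ≤ j := by
  rcases Nat.eq_zero_or_pos (padicValNat p j) with h0 | h1
  · omega
  · have := val_nat_le4 hp5 j (by omega) h1; omega

lemma vbound4 (hp5 : 5 ≤ p) (j : ℕ) (hj : 4 ≤ j) : (padicValNat p j : ℤ) + 4 ≤ j := by
  rcases Nat.eq_zero_or_pos (padicValNat p j) with h0 | h1
  · omega
  · have := val_nat_le4 hp5 j (by omega) h1; omega

lemma val2 (hp5 : 5 ≤ p) : padicValNat p 2 = 0 :=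
  padicValNat.eq_zero_of_not_dvd (pndvd 2 (by omega) (by omega))

lemma val3 (hp5 : 5 ≤ p) : padicValNat p 3 = 0 :=
  padicValNat.eq_zero_of_not_dvd (pndvd 3 (by omega) (by omega))

lemma F2 (hp5 : 5 ≤ p) (m : ℕ) (hm : Even m) (h2 : 2 ≤ m) :
    ‖(((∑ i ∈ range p, (i:ℚ)^m) - (p:ℚ) * bernoulli m : ℚ) : ℚ_[p])‖ ≤ (p:ℝ)^(-2:ℤ) := by
  have hf := faulT (p := p) m
  rw [sum_range_succ, Tm_eq] at hf
  have key : (∑ i ∈ range p, (i:ℚ)^m) - (p:ℚ)*bernoulli m = ∑ k ∈ range m, T p m k := by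
    linarith
  have hsplit : ((((∑ i ∈ range p, (i:ℚ)^m) - (p:ℚ)*bernoulli m : ℚ)) : ℚ_[p])
      = ∑ k ∈ range m, ((T p m k : ℚ):ℚ_[p]) := by rw [key]; push_cast; ring
  rw [hsplit]
  apply IsUltrametricDist.norm_sum_le_of_forall_le_of_nonneg (by positivity)
  intro k hk
  have hk' : k < m := mem_range.mp hk
  rcases eq_or_ne k (m-1) with rfl | hne
  · have hodd : Odd (m-1) := by
      rcases hm with ⟨t, ht⟩; exact ⟨t-1, by omega⟩
    apply term_norm' m (m-1) (by omega) 0 (-2) (B_odd_le_one (by omega) _ hodd)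
    rw [show m+1-(m-1) = 2 by omega, val2 hp5]
    omega
  · apply term_norm' m k (by omega) 1 (-2) (B_le_p k)
    have := vbound3 hp5 (m+1-k) (by omega)
    omega

lemma F3 (hp5 : 5 ≤ p) (m : ℕ) (hm : Even m) (hdvd : p^2 ∣ m+4) :
    ‖(((∑ i ∈ range p, (i:ℚ)^(m+3)) + (p:ℚ)^2 * bernoulli (m+2) / 2 : ℚ) : ℚ_[p])‖
      ≤ (p:ℝ)^(-3:ℤ) := by
  have hf := faulT (p := p) (m+3)
  rw [show m+3+1 = (m+2)+1+1 by ring] at hf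
  rw [sum_range_succ, sum_range_succ] at hf
  have hz : bernoulli (m+3) = 0 := by
    rw [bernoulli_eq_bernoulli'_of_ne_one (by omega)]
    rcases hm with ⟨t, ht⟩
    exact bernoulli'_eq_zero_of_odd ⟨t+1, by omega⟩ (by omega)
  have hTfin : T p (m+3) (m+2+1) = 0 := by
    rw [show m+2+1 = m+3 by ring, Tm_eq, hz]; ring
  have hT2 : T p (m+3) (m+2) = ((m+3 : ℕ) : ℚ) * bernoulli (m+2) * (p:ℚ)^2 / 2 := by
    rw [T, show m+3+1-(m+2) = 2 by omega, Nat.choose_succ_self_right]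
    push_cast
    ring
  have key : (∑ i ∈ range p, (i:ℚ)^(m+3)) + (p:ℚ)^2 * bernoulli (m+2) / 2
      = (∑ k ∈ range (m+2), T p (m+3) k)
        + ((m+4 : ℕ) : ℚ) * bernoulli (m+2) * (p:ℚ)^2 / 2 := by
    rw [hf, hTfin, hT2]
    push_cast
    ring
  have hsplit : ((((∑ i ∈ range p, (i:ℚ)^(m+3)) + (p:ℚ)^2 * bernoulli (m+2) / 2 : ℚ)) : ℚ_[p])
      = (∑ k ∈ range (m+2), ((T p (m+3) k : ℚ) : ℚ_[p]))
        + (((m+4 : ℕ) : ℚ) : ℚ_[p]) * ((bernoulli (m+2) : ℚ) : ℚ_[p])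
          * (((p:ℚ)^2 : ℚ) : ℚ_[p]) * (((2:ℚ)) : ℚ_[p])⁻¹ := by
    rw [key]; push_cast; ring
  rw [hsplit]
  refine le_trans (Padic.nonarchimedean _ _) (max_le ?_ ?_)
  · apply IsUltrametricDist.norm_sum_le_of_forall_le_of_nonneg (by positivity)
    intro k hk
    have hk' : k < m+2 := mem_range.mp hk
    rcases eq_or_ne k (m+1) with rfl | hne
    · have hodd : Odd (m+1) := by rcases hm with ⟨t, ht⟩; exact ⟨t, by omega⟩
      apply term_norm' (m+3) (m+1) (by omega) 0 (-3) (B_odd_le_one (by omega) _ hodd)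
      rw [show m+3+1-(m+1) = 3 by omega, val3 hp5]
      omega
    · apply term_norm' (m+3) k (by omega) 1 (-3) (B_le_p k)
      have := vbound4 hp5 (m+3+1-k) (by omega)
      omega
  · have h1 : ‖(((m+4 : ℕ) : ℚ) : ℚ_[p])‖ ≤ (p:ℝ)^(-2:ℤ) := by
      rw [show (((m+4:ℕ):ℚ)) = (((m+4 : ℕ) : ℤ) : ℚ) by push_cast; ring]
      exact norm_int_le_pow _ 2 (by exact_mod_cast hdvd)
    have h2 : ‖(((p:ℚ)^2 : ℚ) : ℚ_[p])‖ = (p:ℝ)^(-2:ℤ) := norm_p_pow 2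
    have h3 : ‖(((2:ℚ)) : ℚ_[p])⁻¹‖ = 1 := by
      rw [norm_inv, show ((2:ℚ):ℚ_[p]) = (((2:ℕ):ℚ):ℚ_[p]) by norm_num,
        norm_nat_eq_one 2 (pndvd 2 (by omega) (by omega))]
      norm_num
    rw [norm_mul, norm_mul, norm_mul, h2, h3]
    have hB := B_le_p (p := p) (m+2)
    have hp0 := ppos (p := p) (hp := hp)
    calc ‖(((m+4 : ℕ) : ℚ) : ℚ_[p])‖ * ‖((bernoulli (m+2) : ℚ) : ℚ_[p])‖ * (p:ℝ)^(-2:ℤ) * 1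
        ≤ (p:ℝ)^(-2:ℤ) * (p:ℝ)^(1:ℤ) * (p:ℝ)^(-2:ℤ) * 1 := by
          apply mul_le_mul_of_nonneg_right _ zero_le_one
          apply mul_le_mul_of_nonneg_right _ (by positivity)
          exact mul_le_mul h1 hB (norm_nonneg _) (by positivity)
      _ = (p:ℝ)^(-3:ℤ) := by
          rw [mul_one, ← zpow_add₀ (ne_of_gt hp0), ← zpow_add₀ (ne_of_gt hp0)]
          norm_num

lemma euler_dvd (i : ℕ) (h0 : 0 < i) (hi : i < p) :
    (p:ℤ)^3 ∣ (i:ℤ)^(p^2*(p-1)) - 1 := by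
  haveI : NeZero (p^3) := ⟨pow_ne_zero 3 hp.out.ne_zero⟩
  have hcop : Nat.Coprime i (p^3) :=
    Nat.Coprime.pow_right 3 (((Nat.Prime.coprime_iff_not_dvd hp.out).mpr (pndvd i h0 hi)).symm)
  have htot : i ^ Nat.totient (p^3) ≡ 1 [MOD p^3] := Nat.ModEq.pow_totient hcop
  rw [Nat.totient_prime_pow hp.out (by norm_num)] at htot
  have h3 := htot.dvd
  rw [show (3:ℕ)-1 = 2 from rfl] at h3
  have h4 : ((p^3 : ℕ) : ℤ) ∣ (1 - (i:ℤ)^(p^2*(p-1))) := by exact_mod_cast h3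
  have h5 : ((p^3:ℕ):ℤ) = (p:ℤ)^3 := by push_cast; ring
  rw [h5] at h4
  exact dvd_sub_comm.mp h4

lemma Hcong (hp5 : 5 ≤ p) :
    ‖((H (p-1) - ∑ i ∈ range p, (i:ℚ)^(p^2*(p-1)-1) : ℚ) : ℚ_[p])‖ ≤ (p:ℝ)^(-3:ℤ) := by
  have hpos : 1 ≤ p^2*(p-1) :=
    Nat.one_le_iff_ne_zero.mpr (Nat.mul_ne_zero (pow_ne_zero 2 hp.out.ne_zero) (by omega))
  set M := p^2*(p-1)-1 with hMdef
  have hM : M + 1 = p^2*(p-1) := by omega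
  have hM0 : M ≠ 0 := by
    have h25 : 25 ≤ p^2 := by nlinarith
    have : 100 ≤ p^2*(p-1) := by
      calc 100 = 25*4 := by norm_num
      _ ≤ p^2*(p-1) := Nat.mul_le_mul h25 (by omega)
    omega
  have hsum : (∑ i ∈ range p, (i:ℚ)^M) = ∑ i ∈ range (p-1), ((i:ℚ)+1)^M := by
    rw [show range p = range ((p-1)+1) by congr 1; omega, Finset.sum_range_succ']
    push_cast
    rw [zero_pow hM0]
    ring
  have key : H (p-1) - ∑ i ∈ range p, (i:ℚ)^M
      = ∑ i ∈ range (p-1), ((1:ℚ)/(i+1) - ((i:ℚ)+1)^M) := by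
    rw [hsum, H, ← Finset.sum_sub_distrib]
  rw [key]
  have hcast : ((∑ i ∈ range (p-1), ((1:ℚ)/(i+1) - ((i:ℚ)+1)^M) : ℚ) : ℚ_[p])
      = ∑ i ∈ range (p-1), (((1:ℚ)/(i+1) - ((i:ℚ)+1)^M : ℚ) : ℚ_[p]) := by
    push_cast; ring
  rw [hcast]
  apply IsUltrametricDist.norm_sum_le_of_forall_le_of_nonneg (by positivity)
  intro i hi
  have hi' : i < p - 1 := mem_range.mp hi
  have hx : ((i:ℚ)+1) ≠ 0 := by positivity
  have hfact : (1:ℚ)/(i+1) - ((i:ℚ)+1)^M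
      = (((i+1:ℕ):ℚ))⁻¹ * (1 - ((i+1:ℕ):ℚ)^(M+1)) := by
    push_cast
    rw [pow_succ]
    field_simp
  rw [hfact]
  have hsplit : ((((((i+1:ℕ):ℚ))⁻¹ * (1 - ((i+1:ℕ):ℚ)^(M+1)) : ℚ)) : ℚ_[p])
      = ((((i+1:ℕ):ℚ) : ℚ_[p]))⁻¹ * ((((1 - (i+1:ℤ)^(M+1) : ℤ) : ℚ)) : ℚ_[p]) := by
    push_cast; ring
  have hdvd : (p:ℤ)^3 ∣ (1 - (i+1:ℤ)^(M+1)) := by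
    rw [hM]
    exact dvd_sub_comm.mp (euler_dvd (i+1) (by omega) (by omega))
  rw [hsplit, norm_mul, norm_inv, norm_nat_eq_one (i+1) (pndvd (i+1) (by omega) (by omega)),
    inv_one, one_mul]
  exact norm_int_le_pow _ 3 hdvd

lemma bin_expand (x y : ℤ) : ∀ n : ℕ, ∃ z, (x - y)^(n+1) = x^(n+1) - (n+1)*x^n*y + y^2*z
  | 0 => ⟨0, by ring⟩
  | n+1 => by
    obtain ⟨z, hz⟩ := bin_expand x y n
    refine ⟨(n+1)*x^n + z*x - y*z, ?_⟩
    rw [pow_succ, hz]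
    push_cast
    ring

lemma mod_inv_aux (u v j : ℕ) (huv : (u*v) % p = 1) (hj : j < p) :
    (u * ((v*j) % p)) % p = j := by
  rw [Nat.mul_mod, Nat.mod_mod_of_dvd _ dvd_rfl, ← Nat.mul_mod, ← mul_assoc,
    Nat.mul_mod, huv, one_mul, Nat.mod_mod_of_dvd _ dvd_rfl, Nat.mod_eq_of_lt hj]

lemma sum_two_mul_mod (hp5 : 5 ≤ p) (g : ℕ → ℤ) :
    ∑ j ∈ range p, g ((2*j) % p) = ∑ j ∈ range p, g j := by
  have hodd : p % 2 = 1 := by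
    rcases Nat.mod_two_eq_zero_or_one p with h0 | h1
    · exfalso
      have : (2:ℕ) ∣ p := Nat.dvd_of_mod_eq_zero h0
      have := (Nat.Prime.eq_one_or_self_of_dvd hp.out 2 this)
      omega
    · exact h1
  set h := (p+1)/2 with hh
  have h1p : (1 + p) % p = 1 := by
    rw [Nat.add_mod_right, Nat.mod_eq_of_lt (by omega)]
  have h2h : (2*h) % p = 1 := by
    rw [show 2*h = 1 + p by omega]
    exact h1p
  have hh2 : (h*2) % p = 1 := by rw [mul_comm]; exact h2h
  refine Finset.sum_nbij' (i := fun j => (2*j) % p) (j := fun i => (h*i) % p)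
    ?_ ?_ ?_ ?_ ?_
  · intro a ha; exact mem_range.mpr (Nat.mod_lt _ hp.out.pos)
  · intro a ha; exact mem_range.mpr (Nat.mod_lt _ hp.out.pos)
  · intro a ha; exact mod_inv_aux h 2 a hh2 (mem_range.mp ha)
  · intro a ha; exact mod_inv_aux 2 h a h2h (mem_range.mp ha)
  · intro a ha; rfl

lemma mod2_eq (j : ℕ) (hj : j < p) :
    (((2*j) % p : ℕ) : ℤ) = 2*j - p*(if p ≤ 2*j then 1 else 0) := by
  split_ifs with h
  · rw [Nat.mod_eq_sub_mod h, Nat.mod_eq_of_lt (by omega)]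
    push_cast [Nat.cast_sub h]
    ring
  · rw [Nat.mod_eq_of_lt (by omega)]
    push_cast
    ring

lemma voronoi (hp5 : 5 ≤ p) (n : ℕ) :
    (p:ℤ)^2 ∣ (1 - 2^(n+1)) * (∑ j ∈ range p, (j:ℤ)^(n+1))
      + (n+1) * 2^n * p * (∑ j ∈ range p, (j:ℤ)^n * (if p ≤ 2*j then 1 else 0)) := by
  have hperm : ∑ j ∈ range p, (((2*j) % p : ℕ) : ℤ)^(n+1) = ∑ j ∈ range p, (j:ℤ)^(n+1) :=
    sum_two_mul_mod hp5 (fun t => (t:ℤ)^(n+1))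
  have hterm : ∀ j ∈ range p, (p:ℤ)^2 ∣
      ((((2*j) % p : ℕ) : ℤ)^(n+1) - (2*(j:ℤ))^(n+1)
        + ((n:ℤ)+1)*(2*(j:ℤ))^n*((p:ℤ)*(if p ≤ 2*j then 1 else 0))) := by
    intro j hj
    obtain ⟨z, hz⟩ := bin_expand (2*(j:ℤ)) ((p:ℤ)*(if p ≤ 2*j then 1 else 0)) n
    rw [mod2_eq j (mem_range.mp hj)]
    refine ⟨(if p ≤ 2*j then 1 else 0)^2 * z, ?_⟩
    push_cast at hz ⊢
    linear_combination hz
  have hsum := Finset.dvd_sum hterm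
  have heq : ∑ j ∈ range p, ((((2*j) % p : ℕ) : ℤ)^(n+1) - (2*(j:ℤ))^(n+1)
        + ((n:ℤ)+1)*(2*(j:ℤ))^n*((p:ℤ)*(if p ≤ 2*j then 1 else 0)))
      = (1 - 2^(n+1)) * (∑ j ∈ range p, (j:ℤ)^(n+1))
      + (n+1) * 2^n * p * (∑ j ∈ range p, (j:ℤ)^n * (if p ≤ 2*j then 1 else 0)) := by
    rw [Finset.sum_add_distrib, Finset.sum_sub_distrib, hperm]
    have e2 : ∑ j ∈ range p, (2*(j:ℤ))^(n+1) = 2^(n+1) * ∑ j ∈ range p, (j:ℤ)^(n+1) := by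
      rw [Finset.mul_sum]
      exact sum_congr rfl fun j _ => by ring
    have e3 : ∑ j ∈ range p, ((n:ℤ)+1)*(2*(j:ℤ))^n*((p:ℤ)*(if p ≤ 2*j then 1 else 0))
        = ((n:ℤ)+1)*2^n*(p:ℤ)*∑ j ∈ range p, (j:ℤ)^n * (if p ≤ 2*j then 1 else 0) := by
      rw [Finset.mul_sum]
      exact sum_congr rfl fun j _ => by ring
    rw [e2, e3]
    push_cast
    ring
  rwa [heq] at hsum

noncomputable def Gq (p n : ℕ) : ℚ := ((∑ j ∈ range p, (j:ℤ)^n * (if p ≤ 2*j then 1 else 0) : ℤ) : ℚ)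

lemma norm_p_cast : ‖(((p:ℚ)) : ℚ_[p])‖ = (p:ℝ)^(-1:ℤ) := by
  rw [show (((p:ℚ)) : ℚ_[p]) = ((p:ℕ) : ℚ_[p]) by push_cast; ring, Padic.norm_p, zpow_neg_one]

lemma div_p_norm (x : ℚ) (k : ℤ) (h : ‖((((p:ℚ) * x : ℚ)) : ℚ_[p])‖ ≤ (p:ℝ)^(k-1)) :
    ‖((x:ℚ):ℚ_[p])‖ ≤ (p:ℝ)^k := by
  have hsplit : ((((p:ℚ) * x : ℚ)) : ℚ_[p]) = (((p:ℚ)) : ℚ_[p]) * ((x:ℚ):ℚ_[p]) := by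
    push_cast; ring
  rw [hsplit, norm_mul, norm_p_cast] at h
  have h0 := ppos (p := p) (hp := hp)
  have h1 : (p:ℝ)^(-1:ℤ) * ‖((x:ℚ):ℚ_[p])‖ ≤ (p:ℝ)^(k-1) := h
  calc ‖((x:ℚ):ℚ_[p])‖ = ((p:ℝ)^(-1:ℤ) * ‖((x:ℚ):ℚ_[p])‖) * (p:ℝ)^(1:ℤ) := by
        rw [zpow_neg_one, zpow_one]; field_simp
  _ ≤ (p:ℝ)^(k-1) * (p:ℝ)^(1:ℤ) := mul_le_mul_of_nonneg_right h1 (by positivity)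
  _ = (p:ℝ)^k := by rw [← zpow_add₀ (ne_of_gt h0)]; ring_nf

lemma N2 (hp5 : 5 ≤ p) (n : ℕ) (hEven : Even (n+1)) :
    ‖((((1 - 2^(n+1) : ℤ) : ℚ) * bernoulli (n+1)
        + ((n+1 : ℕ) : ℚ) * ((2^n : ℤ) : ℚ) * Gq p n : ℚ) : ℚ_[p])‖ ≤ (p:ℝ)^(-1:ℤ) := by
  apply div_p_norm
  have hkey : (p:ℚ) * (((1 - 2^(n+1) : ℤ) : ℚ) * bernoulli (n+1)
        + ((n+1 : ℕ) : ℚ) * ((2^n : ℤ) : ℚ) * Gq p n)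
      = ((1 - 2^(n+1) : ℤ) : ℚ) * ((p:ℚ) * bernoulli (n+1) - (∑ i ∈ range p, (i:ℚ)^(n+1)))
        + (((1 - 2^(n+1)) * (∑ j ∈ range p, (j:ℤ)^(n+1))
          + (n+1) * 2^n * p * (∑ j ∈ range p, (j:ℤ)^n * (if p ≤ 2*j then 1 else 0)) : ℤ) : ℚ) := by
    rw [Gq]
    push_cast
    ring
  rw [hkey]
  have hc : ((((1 - 2^(n+1) : ℤ) : ℚ) * ((p:ℚ) * bernoulli (n+1) - (∑ i ∈ range p, (i:ℚ)^(n+1)))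
        + (((1 - 2^(n+1)) * (∑ j ∈ range p, (j:ℤ)^(n+1))
          + (n+1) * 2^n * p * (∑ j ∈ range p, (j:ℤ)^n * (if p ≤ 2*j then 1 else 0)) : ℤ) : ℚ) : ℚ) : ℚ_[p])
      = (((1 - 2^(n+1) : ℤ) : ℚ) : ℚ_[p]) * ((((p:ℚ) * bernoulli (n+1) - (∑ i ∈ range p, (i:ℚ)^(n+1)) : ℚ)) : ℚ_[p])
        + (((((1 - 2^(n+1)) * (∑ j ∈ range p, (j:ℤ)^(n+1))
          + (n+1) * 2^n * p * (∑ j ∈ range p, (j:ℤ)^n * (if p ≤ 2*j then 1 else 0)) : ℤ) : ℚ)) : ℚ_[p]) := by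
    push_cast
    ring
  rw [hc]
  refine le_trans (Padic.nonarchimedean _ _) (max_le ?_ ?_)
  · have h1 := norm_int_le_one (p := p) (1 - 2^(n+1))
    have h2 : ‖(((p:ℚ) * bernoulli (n+1) - (∑ i ∈ range p, (i:ℚ)^(n+1)) : ℚ) : ℚ_[p])‖ ≤ (p:ℝ)^(-2:ℤ) := by
      rw [show ((p:ℚ) * bernoulli (n+1) - (∑ i ∈ range p, (i:ℚ)^(n+1)) : ℚ)
          = -((∑ i ∈ range p, (i:ℚ)^(n+1)) - (p:ℚ) * bernoulli (n+1)) by ring]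
      rw [Rat.cast_neg, norm_neg]
      obtain ⟨t, ht⟩ := hEven
      exact F2 hp5 (n+1) ⟨t, ht⟩ (by omega)
    rw [norm_mul]
    calc ‖(((1 - 2^(n+1) : ℤ) : ℚ) : ℚ_[p])‖ * ‖(((p:ℚ) * bernoulli (n+1) - (∑ i ∈ range p, (i:ℚ)^(n+1)) : ℚ) : ℚ_[p])‖
        ≤ 1 * (p:ℝ)^(-2:ℤ) := mul_le_mul h1 h2 (norm_nonneg _) zero_le_one
      _ = (p:ℝ)^(-2:ℤ) := one_mul _
      _ ≤ (p:ℝ)^(-1-1:ℤ) := le_of_eq (by norm_num)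
  · refine le_trans (norm_int_le_pow _ 2 (voronoi hp5 n)) (le_of_eq (by norm_num))

lemma norm_int_eq_one (z : ℤ) (hz : ¬ (p:ℤ) ∣ z) : ‖((z:ℚ) : ℚ_[p])‖ = 1 := by
  have h1 := norm_int_le_one (p:=p) z
  have h2 : ¬ ‖((z:ℚ):ℚ_[p])‖ < 1 := by
    rw [show ((z:ℚ):ℚ_[p]) = (z : ℚ_[p]) by push_cast; ring, Padic.norm_intCast_lt_one_iff]
    exact_mod_cast hz
  rcases lt_or_eq_of_le h1 with h | h
  · exact absurd h h2
  · exact h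

lemma fermat_int (x : ℕ) (hx : ¬ p ∣ x) : (p:ℤ) ∣ (x:ℤ)^(p-1) - 1 := by
  have h1 : ((x:ℕ) : ZMod p) ≠ 0 := by
    rw [Ne, ZMod.natCast_eq_zero_iff]
    exact hx
  have h2 := ZMod.pow_card_sub_one_eq_one h1
  have h3 : (((x:ℤ)^(p-1) - 1 : ℤ) : ZMod p) = 0 := by
    push_cast
    rw [h2]
    ring
  exact_mod_cast (ZMod.intCast_zmod_eq_zero_iff_dvd _ _).mp h3

lemma pow_sub_pow_dvd (x : ℕ) (hx : ¬ p ∣ x) (s c : ℕ) :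
    (p:ℤ) ∣ (x:ℤ)^(s + (p-1)*c) - (x:ℤ)^s := by
  have h1 : (x:ℤ)^(s+(p-1)*c) - x^s = x^s * (((x:ℤ)^(p-1))^c - 1^c) := by
    rw [pow_add, pow_mul]; ring
  rw [h1]
  exact Dvd.dvd.mul_left ((fermat_int x hx).trans (by simpa using sub_dvd_pow_sub_pow ((x:ℤ)^(p-1)) 1 c)) _

lemma G_cong (hp5 : 5 ≤ p) (s c : ℕ) (hs : 1 ≤ s) :
    (p:ℤ) ∣ (∑ j ∈ range p, (j:ℤ)^(s+(p-1)*c) * (if p ≤ 2*j then 1 else 0))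
      - (∑ j ∈ range p, (j:ℤ)^s * (if p ≤ 2*j then 1 else 0)) := by
  rw [← Finset.sum_sub_distrib]
  apply Finset.dvd_sum
  intro j hj
  rw [show (j:ℤ)^(s+(p-1)*c) * (if p ≤ 2*j then 1 else 0) - (j:ℤ)^s * (if p ≤ 2*j then 1 else 0)
      = ((j:ℤ)^(s+(p-1)*c) - (j:ℤ)^s) * (if p ≤ 2*j then 1 else 0) from by ring]
  rcases Nat.eq_zero_or_pos j with rfl | hj0
  · rw [show ((0:ℕ):ℤ) = 0 by norm_num, zero_pow (by omega : s+(p-1)*c ≠ 0), zero_pow (by omega : s ≠ 0)]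
    simp
  · exact Dvd.dvd.mul_right (pow_sub_pow_dvd j (pndvd j hj0 (mem_range.mp hj)) s c) _

lemma unit_one_sub_two_pow (hp5 : 5 ≤ p) (b : ℕ) (hb : b + 3 = p) : ¬ (p:ℤ) ∣ (1 - 2^b) := by
  intro hdvd
  have h0 : ((1 - 2^b : ℤ) : ZMod p) = 0 := (ZMod.intCast_zmod_eq_zero_iff_dvd _ _).mpr hdvd
  have h1 : ((2:ZMod p))^b = 1 := by
    push_cast at h0
    linear_combination -h0
  have h2 : ((2:ZMod p)) ≠ 0 := by
    intro h
    have h2' : (((2:ℕ)):ZMod p) = 0 := by exact_mod_cast h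
    exact pndvd 2 (by omega) (by omega) ((ZMod.natCast_eq_zero_iff 2 p).mp h2')
  have h3 := ZMod.pow_card_sub_one_eq_one h2
  have h4 : (2:ZMod p)^(p-1) = (2:ZMod p)^b * 2^2 := by
    rw [← pow_add]
    congr 1
    omega
  rw [h3, h1, one_mul] at h4
  have h5 : ((3:ℕ) : ZMod p) = 0 := by
    push_cast
    linear_combination -h4
  have h6 := (ZMod.natCast_eq_zero_iff _ _).mp h5
  have := Nat.le_of_dvd (by norm_num) h6
  omega


lemma kummer (hp5 : 5 ≤ p) (b A : ℕ) (hbdef : b + 3 = p) (hAdef : A + 2 = p^2*(p-1)) :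
    ‖(((3:ℚ) * bernoulli A - 2 * bernoulli b : ℚ) : ℚ_[p])‖ ≤ (p:ℝ)^(-1:ℤ)
    ∧ ‖((bernoulli A : ℚ) : ℚ_[p])‖ ≤ 1 ∧ ‖((bernoulli b : ℚ) : ℚ_[p])‖ ≤ 1 := by
  have hodd : p % 2 = 1 := by
    rcases Nat.mod_two_eq_zero_or_one p with h0 | h1
    · exfalso
      have h2 : (2:ℕ) ∣ p := Nat.dvd_of_mod_eq_zero h0
      have := (Nat.Prime.eq_one_or_self_of_dvd hp.out 2 h2)
      omega
    · exact h1
  have h25 : 25 ≤ p^2 := by nlinarith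
  have hq : 100 ≤ p^2*(p-1) := by
    calc (100:ℕ) = 25*4 := by norm_num
    _ ≤ p^2*(p-1) := Nat.mul_le_mul h25 (by omega)
  -- set up primed exponents
  obtain ⟨b', hb'⟩ : ∃ b', b = b'+1 := ⟨b-1, by omega⟩
  obtain ⟨A', hA'⟩ : ∃ A', A = A'+1 := ⟨A-1, by omega⟩
  set c : ℕ := (p-1)*(p+1) with hcdef
  -- integer versions of defs
  have hbz : (b:ℤ) + 3 = p := by exact_mod_cast hbdef
  have hAz : (A:ℤ) + 2 = (p:ℤ)^2*((p:ℤ)-1) := by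
    have : ((A + 2 : ℕ) : ℤ) = ((p^2*(p-1) : ℕ) : ℤ) := by exact_mod_cast congrArg (Nat.cast) hAdef
    push_cast [Nat.cast_sub (show 1 ≤ p by omega)] at this
    linarith
  have hcz : (c:ℤ) = ((p:ℤ)-1)*((p:ℤ)+1) := by
    rw [hcdef]
    push_cast [Nat.cast_sub (show 1 ≤ p by omega)]
    ring
  have hAbc : A = b + (p-1)*c := by
    have h1 : (A:ℤ) = (b:ℤ) + ((p:ℤ)-1)*(c:ℤ) := by
      rw [hcz]
      linear_combination hAz - hbz
    have h2 : ((b + (p-1)*c : ℕ) : ℤ) = (b:ℤ) + ((p:ℤ)-1)*(c:ℤ) := by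
      push_cast [Nat.cast_sub (show 1 ≤ p by omega)]
      ring
    exact_mod_cast h1.trans h2.symm
  have hAbc' : A' = b' + (p-1)*c := by omega
  -- parity
  obtain ⟨s, hs⟩ : ∃ s, p^2*(p-1) = 2*s := by
    refine ⟨p^2*((p-1)/2), ?_⟩
    have hps : (p-1) = 2*((p-1)/2) := by omega
    calc p^2*(p-1) = p^2*(2*((p-1)/2)) := by rw [← hps]
    _ = 2*(p^2*((p-1)/2)) := by ring
  have hEvA : Even (A'+1) := by
    refine ⟨s - 1, by omega⟩
  have hEvb : Even (b'+1) := ⟨(p-3)/2, by omega⟩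
  -- G notation
  set GA : ℤ := ∑ j ∈ range p, (j:ℤ)^A' * (if p ≤ 2*j then 1 else 0) with hGA
  set Gb : ℤ := ∑ j ∈ range p, (j:ℤ)^b' * (if p ≤ 2*j then 1 else 0) with hGb
  -- modular facts
  have hnd2 : ¬ p ∣ 2 := pndvd 2 (by omega) (by omega)
  have h2f : (p:ℤ) ∣ 2^A - 2^b := by
    rw [hAbc]
    simpa using pow_sub_pow_dvd 2 hnd2 b c
  have h2f' : (p:ℤ) ∣ 2^A' - 2^b' := by
    rw [hAbc']
    simpa using pow_sub_pow_dvd 2 hnd2 b' c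
  have hGG : (p:ℤ) ∣ GA - Gb := by
    rw [hGA, hGb, hAbc']
    exact G_cong hp5 b' c (by omega)
  have hA2 : (p:ℤ) ∣ (A:ℤ) + 2 := ⟨(p:ℤ)*((p:ℤ)-1), by linear_combination hAz⟩
  have hb3 : (p:ℤ) ∣ (b:ℤ) + 3 := ⟨1, by linarith⟩
  have hu_b : ¬ (p:ℤ) ∣ (1 - 2^b) := unit_one_sub_two_pow hp5 b hbdef
  have hu_A : ¬ (p:ℤ) ∣ (1 - 2^A) := by
    intro h
    exact hu_b (by
      have := dvd_add h h2f
      rw [show (1 - 2^A) + (2^A - 2^b) = (1 - 2^b : ℤ) from by ring] at this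
      exact this)
  have hnA : ‖(((1 - 2^A : ℤ):ℚ) : ℚ_[p])‖ = 1 := norm_int_eq_one _ hu_A
  have hnb : ‖(((1 - 2^b : ℤ):ℚ) : ℚ_[p])‖ = 1 := norm_int_eq_one _ hu_b
  -- N2 instances
  have hN2A := N2 hp5 A' hEvA
  have hN2b := N2 hp5 b' hEvb
  rw [show A' + 1 = A from hA'.symm] at hN2A
  rw [show b' + 1 = b from hb'.symm] at hN2b
  rw [show Gq p A' = (GA : ℚ) from by rw [Gq, hGA]] at hN2A
  rw [show Gq p b' = (Gb : ℚ) from by rw [Gq, hGb]] at hN2b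
  -- norm of the G side-terms: integers
  have hsideA : ‖((((A : ℕ) : ℚ) * ((2^A' : ℤ) : ℚ) * (GA:ℚ) : ℚ) : ℚ_[p])‖ ≤ 1 := by
    rw [show (((A : ℕ) : ℚ) * ((2^A' : ℤ) : ℚ) * (GA:ℚ) : ℚ) = (((A:ℤ)*2^A'*GA : ℤ) : ℚ) from by push_cast; ring]
    exact norm_int_le_one _
  have hsideb : ‖((((b : ℕ) : ℚ) * ((2^b' : ℤ) : ℚ) * (Gb:ℚ) : ℚ) : ℚ_[p])‖ ≤ 1 := by
    rw [show (((b : ℕ) : ℚ) * ((2^b' : ℤ) : ℚ) * (Gb:ℚ) : ℚ) = (((b:ℤ)*2^b'*Gb : ℤ) : ℚ) from by push_cast; ring]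
    exact norm_int_le_one _
  -- bound on bernoulli A and bernoulli b norms
  have hp1 : (p:ℝ)^(-1:ℤ) ≤ 1 := by
    have h0 := ppos (p := p) (hp := hp)
    rw [zpow_neg_one]
    rw [inv_le_one_iff₀]
    right
    exact_mod_cast hp.out.one_le
  have hBA1 : ‖((bernoulli A : ℚ) : ℚ_[p])‖ ≤ 1 := by
    have key : (((1 - 2^A : ℤ):ℚ) * bernoulli A : ℚ)
        = (((1 - 2^A : ℤ) : ℚ) * bernoulli A + ((A : ℕ) : ℚ) * ((2^A' : ℤ) : ℚ) * (GA:ℚ))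
          - (((A : ℕ) : ℚ) * ((2^A' : ℤ) : ℚ) * (GA:ℚ)) := by ring
    have h1 : ‖((((1 - 2^A : ℤ):ℚ) * bernoulli A : ℚ) : ℚ_[p])‖ ≤ 1 := by
      rw [key, show ((((((1 - 2^A : ℤ) : ℚ) * bernoulli A + ((A : ℕ) : ℚ) * ((2^A' : ℤ) : ℚ) * (GA:ℚ))
          - (((A : ℕ) : ℚ) * ((2^A' : ℤ) : ℚ) * (GA:ℚ)) : ℚ)) : ℚ_[p])
        = (((((1 - 2^A : ℤ) : ℚ) * bernoulli A + ((A : ℕ) : ℚ) * ((2^A' : ℤ) : ℚ) * (GA:ℚ) : ℚ)) : ℚ_[p])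
          + (-(((((A : ℕ) : ℚ) * ((2^A' : ℤ) : ℚ) * (GA:ℚ) : ℚ)) : ℚ_[p])) from by push_cast; ring]
      refine le_trans (Padic.nonarchimedean _ _) (max_le (le_trans hN2A hp1) ?_)
      rw [norm_neg]
      exact hsideA
    rw [show ((((1 - 2^A : ℤ):ℚ) * bernoulli A : ℚ) : ℚ_[p])
        = (((1 - 2^A : ℤ):ℚ) : ℚ_[p]) * ((bernoulli A : ℚ) : ℚ_[p]) from by push_cast; ring,
      norm_mul, hnA, one_mul] at h1
    exact h1
  have hBb1 : ‖((bernoulli b : ℚ) : ℚ_[p])‖ ≤ 1 := by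
    have key : (((1 - 2^b : ℤ):ℚ) * bernoulli b : ℚ)
        = (((1 - 2^b : ℤ) : ℚ) * bernoulli b + ((b : ℕ) : ℚ) * ((2^b' : ℤ) : ℚ) * (Gb:ℚ))
          - (((b : ℕ) : ℚ) * ((2^b' : ℤ) : ℚ) * (Gb:ℚ)) := by ring
    have h1 : ‖((((1 - 2^b : ℤ):ℚ) * bernoulli b : ℚ) : ℚ_[p])‖ ≤ 1 := by
      rw [key, show ((((((1 - 2^b : ℤ) : ℚ) * bernoulli b + ((b : ℕ) : ℚ) * ((2^b' : ℤ) : ℚ) * (Gb:ℚ))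
          - (((b : ℕ) : ℚ) * ((2^b' : ℤ) : ℚ) * (Gb:ℚ) : ℚ)) : ℚ) : ℚ_[p])
        = (((((1 - 2^b : ℤ) : ℚ) * bernoulli b + ((b : ℕ) : ℚ) * ((2^b' : ℤ) : ℚ) * (Gb:ℚ) : ℚ)) : ℚ_[p])
          + (-(((((b : ℕ) : ℚ) * ((2^b' : ℤ) : ℚ) * (Gb:ℚ) : ℚ)) : ℚ_[p])) from by push_cast; ring]
      refine le_trans (Padic.nonarchimedean _ _) (max_le (le_trans hN2b hp1) ?_)
      rw [norm_neg]
      exact hsideb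
    rw [show ((((1 - 2^b : ℤ):ℚ) * bernoulli b : ℚ) : ℚ_[p])
        = (((1 - 2^b : ℤ):ℚ) : ℚ_[p]) * ((bernoulli b : ℚ) : ℚ_[p]) from by push_cast; ring,
      norm_mul, hnb, one_mul] at h1
    exact h1
  -- D divisibility
  obtain ⟨u1, hu1⟩ := hA2
  obtain ⟨u2, hu2⟩ := h2f'
  obtain ⟨u3, hu3⟩ := hGG
  obtain ⟨u4, hu4⟩ := hb3
  have hD : (p:ℤ) ∣ (3*(A:ℤ)*2^A'*GA - 2*(b:ℤ)*2^b'*Gb) :=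
    ⟨3*u1*2^A'*GA - 6*u2*GA - 6*2^b'*u3 - 2*u4*2^b'*Gb, by
      linear_combination (3*(2:ℤ)^A'*GA) * hu1 - 6*GA*hu2 - 6*2^b'*hu3 - 2*2^b'*Gb*hu4⟩
  -- X bound
  have hX : ‖((((3:ℚ) * (((1 - 2^A : ℤ) : ℚ) * bernoulli A + ((A : ℕ) : ℚ) * ((2^A' : ℤ) : ℚ) * (GA:ℚ))
      - 2 * (((1 - 2^b : ℤ) : ℚ) * bernoulli b + ((b : ℕ) : ℚ) * ((2^b' : ℤ) : ℚ) * (Gb:ℚ)) : ℚ)) : ℚ_[p])‖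
      ≤ (p:ℝ)^(-1:ℤ) := by
    rw [show ((((3:ℚ) * (((1 - 2^A : ℤ) : ℚ) * bernoulli A + ((A : ℕ) : ℚ) * ((2^A' : ℤ) : ℚ) * (GA:ℚ))
      - 2 * (((1 - 2^b : ℤ) : ℚ) * bernoulli b + ((b : ℕ) : ℚ) * ((2^b' : ℤ) : ℚ) * (Gb:ℚ)) : ℚ)) : ℚ_[p])
      = ((3:ℚ) : ℚ_[p]) * (((((1 - 2^A : ℤ) : ℚ) * bernoulli A + ((A : ℕ) : ℚ) * ((2^A' : ℤ) : ℚ) * (GA:ℚ) : ℚ)) : ℚ_[p])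
        + (-(((2:ℚ) : ℚ_[p]) * (((((1 - 2^b : ℤ) : ℚ) * bernoulli b + ((b : ℕ) : ℚ) * ((2^b' : ℤ) : ℚ) * (Gb:ℚ) : ℚ)) : ℚ_[p]))) from by push_cast; ring]
    refine le_trans (Padic.nonarchimedean _ _) (max_le ?_ ?_)
    · rw [norm_mul]
      calc ‖((3:ℚ) : ℚ_[p])‖ * _ ≤ 1 * (p:ℝ)^(-1:ℤ) := by
            apply mul_le_mul _ hN2A (norm_nonneg _) zero_le_one
            rw [show ((3:ℚ) : ℚ_[p]) = (((3:ℤ):ℚ) : ℚ_[p]) from by norm_num]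
            exact norm_int_le_one 3
        _ = (p:ℝ)^(-1:ℤ) := one_mul _
    · rw [norm_neg, norm_mul]
      calc ‖((2:ℚ) : ℚ_[p])‖ * _ ≤ 1 * (p:ℝ)^(-1:ℤ) := by
            apply mul_le_mul _ hN2b (norm_nonneg _) zero_le_one
            rw [show ((2:ℚ) : ℚ_[p]) = (((2:ℤ):ℚ) : ℚ_[p]) from by norm_num]
            exact norm_int_le_one 2
        _ = (p:ℝ)^(-1:ℤ) := one_mul _
  -- third term bound
  have h3rd : ‖((((3*(2^A - 2^b) : ℤ) : ℚ) * bernoulli A : ℚ) : ℚ_[p])‖ ≤ (p:ℝ)^(-1:ℤ) := by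
    rw [show ((((3*(2^A - 2^b) : ℤ) : ℚ) * bernoulli A : ℚ) : ℚ_[p])
      = (((3*(2^A - 2^b) : ℤ) : ℚ) : ℚ_[p]) * ((bernoulli A : ℚ) : ℚ_[p]) from by push_cast; ring,
      norm_mul]
    calc ‖(((3*(2^A - 2^b) : ℤ) : ℚ) : ℚ_[p])‖ * ‖((bernoulli A : ℚ) : ℚ_[p])‖
        ≤ (p:ℝ)^(-1:ℤ) * 1 := by
          apply mul_le_mul _ hBA1 (norm_nonneg _) (by positivity)
          have := norm_int_le_pow (p := p) (3*(2^A - 2^b)) 1 (by simpa using Dvd.dvd.mul_left h2f 3)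
          simpa using this
      _ = (p:ℝ)^(-1:ℤ) := mul_one _
  -- final combination
  have hfinal : ‖((((1 - 2^b : ℤ):ℚ) * ((3:ℚ) * bernoulli A - 2 * bernoulli b) : ℚ) : ℚ_[p])‖ ≤ (p:ℝ)^(-1:ℤ) := by
    have hid : (((1 - 2^b : ℤ):ℚ) * ((3:ℚ) * bernoulli A - 2 * bernoulli b) : ℚ)
        = ((3:ℚ) * (((1 - 2^A : ℤ) : ℚ) * bernoulli A + ((A : ℕ) : ℚ) * ((2^A' : ℤ) : ℚ) * (GA:ℚ))
          - 2 * (((1 - 2^b : ℤ) : ℚ) * bernoulli b + ((b : ℕ) : ℚ) * ((2^b' : ℤ) : ℚ) * (Gb:ℚ)))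
          - ((3*(A:ℤ)*2^A'*GA - 2*(b:ℤ)*2^b'*Gb : ℤ) : ℚ)
          + (((3*(2^A - 2^b) : ℤ) : ℚ) * bernoulli A) := by
      push_cast
      ring
    rw [hid]
    rw [show ((((3:ℚ) * (((1 - 2^A : ℤ) : ℚ) * bernoulli A + ((A : ℕ) : ℚ) * ((2^A' : ℤ) : ℚ) * (GA:ℚ))
          - 2 * (((1 - 2^b : ℤ) : ℚ) * bernoulli b + ((b : ℕ) : ℚ) * ((2^b' : ℤ) : ℚ) * (Gb:ℚ))
          - ((3*(A:ℤ)*2^A'*GA - 2*(b:ℤ)*2^b'*Gb : ℤ) : ℚ)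
          + (((3*(2^A - 2^b) : ℤ) : ℚ) * bernoulli A) : ℚ)) : ℚ_[p])
      = ((((3:ℚ) * (((1 - 2^A : ℤ) : ℚ) * bernoulli A + ((A : ℕ) : ℚ) * ((2^A' : ℤ) : ℚ) * (GA:ℚ))
          - 2 * (((1 - 2^b : ℤ) : ℚ) * bernoulli b + ((b : ℕ) : ℚ) * ((2^b' : ℤ) : ℚ) * (Gb:ℚ)) : ℚ)) : ℚ_[p])
        + (-((((3*(A:ℤ)*2^A'*GA - 2*(b:ℤ)*2^b'*Gb : ℤ) : ℚ)) : ℚ_[p]))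
        + (((((3*(2^A - 2^b) : ℤ) : ℚ) * bernoulli A : ℚ)) : ℚ_[p]) from by push_cast; ring]
    refine le_trans (Padic.nonarchimedean _ _) (max_le (le_trans (Padic.nonarchimedean _ _) (max_le hX ?_)) h3rd)
    rw [norm_neg]
    have := norm_int_le_pow (p := p) _ 1 (by rwa [pow_one] : (p:ℤ)^1 ∣ (3*(A:ℤ)*2^A'*GA - 2*(b:ℤ)*2^b'*Gb))
    simpa using this
  rw [show ((((1 - 2^b : ℤ):ℚ) * ((3:ℚ) * bernoulli A - 2 * bernoulli b) : ℚ) : ℚ_[p])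
      = (((1 - 2^b : ℤ):ℚ) : ℚ_[p]) * ((((3:ℚ) * bernoulli A - 2 * bernoulli b : ℚ)) : ℚ_[p]) from by push_cast; ring,
    norm_mul, hnb, one_mul] at hfinal
  exact ⟨hfinal, hBA1, hBb1⟩

lemma bern_ne_zero (k : ℕ) (hk : k ≠ 0) : bernoulli (2*k) ≠ 0 := by
  intro hB
  have hz := hasSum_zeta_nat hk
  rw [hB] at hz
  norm_num at hz
  have h1 := le_hasSum hz 1 (fun j _ => by positivity)
  norm_num at h1


end Wolst

open Wolst in
theorem stmt_17 (p : ℕ) (hp : p.Prime) (hp5 : 5 ≤ p) :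
    1 ≤ padicValRat p (bernoulli (p - 3)) ↔ 3 ≤ padicValRat p (H (p - 1)) := by
  haveI hfp : Fact p.Prime := ⟨hp⟩
  have hodd : p % 2 = 1 := by
    rcases Nat.mod_two_eq_zero_or_one p with h0 | h1
    · exfalso
      have h2 : (2:ℕ) ∣ p := Nat.dvd_of_mod_eq_zero h0
      have := (Nat.Prime.eq_one_or_self_of_dvd hp 2 h2)
      omega
    · exact h1
  have h25 : 25 ≤ p^2 := by nlinarith
  have hq : 100 ≤ p^2*(p-1) := by
    calc (100:ℕ) = 25*4 := by norm_num
    _ ≤ p^2*(p-1) := Nat.mul_le_mul h25 (by omega)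
  obtain ⟨s, hs⟩ : ∃ s, p^2*(p-1) = 2*s := by
    refine ⟨p^2*((p-1)/2), ?_⟩
    have hps : (p-1) = 2*((p-1)/2) := by omega
    calc p^2*(p-1) = p^2*(2*((p-1)/2)) := by rw [← hps]
    _ = 2*(p^2*((p-1)/2)) := by ring
  set b := p - 3 with hb
  set A := p^2*(p-1) - 2 with hA
  have hbdef : b + 3 = p := by omega
  have hAdef : A + 2 = p^2*(p-1) := by omega
  -- nonvanishing
  have hB0 : bernoulli b ≠ 0 := by
    have : b = 2*((p-3)/2) := by omega
    rw [this]
    exact bern_ne_zero _ (by omega)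
  have hH0 : H (p-1) ≠ 0 := by
    have : 0 < H (p-1) := by
      apply Finset.sum_pos
      · intro i _; positivity
      · exact ⟨0, Finset.mem_range.mpr (by omega)⟩
    exact this.ne'
  -- the p^{-3} congruence
  have hEv4 : Even (p^2*(p-1)-4) := ⟨s-2, by omega⟩
  have hdvd4 : p^2 ∣ (p^2*(p-1)-4)+4 := by
    rw [show (p^2*(p-1)-4)+4 = p^2*(p-1) by omega]
    exact Dvd.intro _ rfl
  have hF3 := F3 hp5 (p^2*(p-1)-4) hEv4 hdvd4
  rw [show p^2*(p-1)-4+3 = p^2*(p-1)-1 by omega, show p^2*(p-1)-4+2 = A by omega] at hF3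
  have hHc := Hcong hp5
  have hH3 : ‖((H (p-1) + (p:ℚ)^2 * bernoulli A / 2 : ℚ) : ℚ_[p])‖ ≤ (p:ℝ)^(-3:ℤ) := by
    rw [show ((H (p-1) + (p:ℚ)^2 * bernoulli A / 2 : ℚ) : ℚ_[p])
        = ((H (p-1) - ∑ i ∈ range p, (i:ℚ)^(p^2*(p-1)-1) : ℚ) : ℚ_[p])
          + (((∑ i ∈ range p, (i:ℚ)^(p^2*(p-1)-1)) + (p:ℚ)^2 * bernoulli A / 2 : ℚ) : ℚ_[p]) from by
      push_cast; ring]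
    exact le_trans (Padic.nonarchimedean _ _) (max_le hHc hF3)
  obtain ⟨hK, hBA1, hBb1⟩ := kummer hp5 b A hbdef hAdef
  -- convert goal
  rw [vrat _ hB0 1, vrat _ hH0 3]
  -- step 1 : RHS iff
  have hst1 : (‖((H (p-1) : ℚ) : ℚ_[p])‖ ≤ (p:ℝ)^(-3:ℤ))
      ↔ ‖(((p:ℚ)^2 * bernoulli A / 2 : ℚ) : ℚ_[p])‖ ≤ (p:ℝ)^(-3:ℤ) := by
    have h := norm_le_iff_close (p := p) ((H (p-1) : ℚ) : ℚ_[p])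
      (-(((p:ℚ)^2 * bernoulli A / 2 : ℚ) : ℚ_[p])) ((p:ℝ)^(-3:ℤ)) (by
        rw [sub_neg_eq_add]
        rw [show ((H (p-1) : ℚ) : ℚ_[p]) + (((p:ℚ)^2 * bernoulli A / 2 : ℚ) : ℚ_[p])
            = ((H (p-1) + (p:ℚ)^2 * bernoulli A / 2 : ℚ) : ℚ_[p]) from by push_cast; ring]
        exact hH3)
    rwa [norm_neg] at h
  -- step 2 : norm of p^2 B_A /2
  have hnorm2 : ‖(((p:ℚ)^2 * bernoulli A / 2 : ℚ) : ℚ_[p])‖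
      = (p:ℝ)^(-2:ℤ) * ‖((bernoulli A : ℚ) : ℚ_[p])‖ := by
    rw [show (((p:ℚ)^2 * bernoulli A / 2 : ℚ) : ℚ_[p])
        = (((p:ℚ)^2 : ℚ) : ℚ_[p]) * ((bernoulli A : ℚ) : ℚ_[p]) * ((((2:ℕ):ℚ)) : ℚ_[p])⁻¹ from by
      push_cast; ring]
    rw [norm_mul, norm_mul, norm_inv, norm_p_pow 2, norm_nat_eq_one 2 (pndvd 2 (by omega) (by omega))]
    norm_num
  have hppos := ppos (p := p) (hp := hfp)
  have hst2 : (‖(((p:ℚ)^2 * bernoulli A / 2 : ℚ) : ℚ_[p])‖ ≤ (p:ℝ)^(-3:ℤ))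
      ↔ ‖((bernoulli A : ℚ) : ℚ_[p])‖ ≤ (p:ℝ)^(-1:ℤ) := by
    rw [hnorm2, show ((p:ℝ))^(-3:ℤ) = (p:ℝ)^(-2:ℤ) * (p:ℝ)^(-1:ℤ) from by
      rw [← zpow_add₀ (ne_of_gt hppos)]; norm_num]
    exact mul_le_mul_iff_right₀ (by positivity)
  -- step 3 : A ↔ b via kummer
  have hst3 : (‖((bernoulli A : ℚ) : ℚ_[p])‖ ≤ (p:ℝ)^(-1:ℤ))
      ↔ ‖((bernoulli b : ℚ) : ℚ_[p])‖ ≤ (p:ℝ)^(-1:ℤ) := by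
    have h3n : ‖(((3:ℚ) * bernoulli A : ℚ) : ℚ_[p])‖ = ‖((bernoulli A : ℚ) : ℚ_[p])‖ := by
      rw [show (((3:ℚ) * bernoulli A : ℚ) : ℚ_[p]) = ((((3:ℕ):ℚ)) : ℚ_[p]) * ((bernoulli A : ℚ) : ℚ_[p]) from by
        push_cast; ring]
      rw [norm_mul, norm_nat_eq_one 3 (pndvd 3 (by omega) (by omega)), one_mul]
    have h2n : ‖(((2:ℚ) * bernoulli b : ℚ) : ℚ_[p])‖ = ‖((bernoulli b : ℚ) : ℚ_[p])‖ := by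
      rw [show (((2:ℚ) * bernoulli b : ℚ) : ℚ_[p]) = ((((2:ℕ):ℚ)) : ℚ_[p]) * ((bernoulli b : ℚ) : ℚ_[p]) from by
        push_cast; ring]
      rw [norm_mul, norm_nat_eq_one 2 (pndvd 2 (by omega) (by omega)), one_mul]
    have h := norm_le_iff_close (p := p) (((3:ℚ) * bernoulli A : ℚ) : ℚ_[p])
      (((2:ℚ) * bernoulli b : ℚ) : ℚ_[p]) ((p:ℝ)^(-1:ℤ)) (by
        rw [show (((3:ℚ) * bernoulli A : ℚ) : ℚ_[p]) - (((2:ℚ) * bernoulli b : ℚ) : ℚ_[p])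
            = (((3:ℚ) * bernoulli A - 2 * bernoulli b : ℚ) : ℚ_[p]) from by push_cast; ring]
        exact hK)
    rw [h3n, h2n] at h
    exact h
  rw [hst1, hst2, hst3]
end

section
/- Let p ≥ 5 be a Wolstenholme prime (i.e. ν_p(B_{p−3}) ≥ 1), and let n be a positive integer with p ∤ n and ν_p(H(n)) = 3. Then ν_p(H(pn)) = 2. -/
open Finset

lemma binom2 (x y : ℤ) : ∀ m : ℕ, y^2 ∣ (x+y)^(m+1) - x^(m+1) - (m+1) * x^m * y := by
  intro m
  induction m with
  | zero => simp
  | succ m ih =>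
    obtain ⟨c, hc⟩ := ih
    exact ⟨(x+y)*c + (m+1)*x^m, by push_cast; linear_combination (x+y)*hc⟩

lemma sum_two_mul {A : Type*} [AddCommMonoid A] (f : ℕ → A) (P : ℕ) :
    ∑ r ∈ range (2*P), f r = ∑ j ∈ range P, (f (2*j) + f (2*j+1)) := by
  induction P with
  | zero => simp
  | succ P ih =>
    rw [Nat.mul_succ, sum_range_add, sum_range_succ, ih]
    simp [sum_range_succ]

lemma pair_split {A : Type*} [AddCommMonoid A] (f : ℕ → A) (P : ℕ) :
    ∑ r ∈ range (2*P), f (r+1) = ∑ j ∈ range P, (f (j+1) + f (2*P - j)) := by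
  have h2 : ∑ j ∈ range P, f (P+P - j) = ∑ j ∈ range P, f (P+j+1) := by
    rw [← Finset.sum_range_reflect (fun i => f (P+i+1)) P]
    refine sum_congr rfl fun j hj => ?_
    simp only [mem_range] at hj
    have e : P+(P-1-j)+1 = P+P-j := by omega
    rw [e]
  rw [two_mul, sum_range_add, sum_add_distrib, h2]

lemma evenodd_split {A : Type*} [AddCommMonoid A] (f : ℕ → A) (P : ℕ) :
    ∑ r ∈ range (2*P), f (r+1) = ∑ j ∈ range P, (f (2*(j+1)) + f (2*P+1 - 2*(j+1))) := by
  rw [sum_two_mul, sum_add_distrib, sum_add_distrib]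
  have ho : ∑ j ∈ range P, f (2*j+1) = ∑ j ∈ range P, f (2*P+1-2*(j+1)) := by
    rw [← Finset.sum_range_reflect (fun i => f (2*i+1)) P]
    refine sum_congr rfl fun j hj => ?_
    simp only [mem_range] at hj
    have e : 2*(P-1-j)+1 = 2*P+1-2*(j+1) := by omega
    rw [e]
  have he : ∑ j ∈ range P, f (2*j+1+1) = ∑ j ∈ range P, f (2*(j+1)) :=
    sum_congr rfl fun j _ => by have e : 2*j+1+1 = 2*(j+1) := by omega
                                rw [e]
  rw [ho, he]
  try exact add_comm _ _

lemma normsum {p : ℕ} [Fact p.Prime] {α : Type*} (s : Finset α) (f : α → ℚ) (C : ℚ) (hC : 0 ≤ C)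
    (h : ∀ i ∈ s, padicNorm p (f i) ≤ C) : padicNorm p (∑ i ∈ s, f i) ≤ C := by
  induction s using Finset.cons_induction with
  | empty => simpa [padicNorm.zero] using hC
  | cons a s ha ih =>
    rw [Finset.sum_cons]
    exact le_trans padicNorm.nonarchimedean (max_le (h a (mem_cons_self a s))
      (ih fun i hi => h i (mem_cons.mpr (Or.inr hi))))

lemma norm_int_eq_one {p : ℕ} [Fact p.Prime] {z : ℤ} (hz : ¬ (p:ℤ) ∣ z) : padicNorm p (z:ℚ) = 1 :=
  le_antisymm (padicNorm.of_int z) (not_lt.mp (fun h => hz ((padicNorm.int_lt_one_iff z).mp h)))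

lemma norm_nat_eq_one {p : ℕ} [Fact p.Prime] {r : ℕ} (hr : ¬ p ∣ r) : padicNorm p (r:ℚ) = 1 := by
  have : ¬ (p:ℤ) ∣ (r:ℤ) := by exact_mod_cast hr
  simpa using norm_int_eq_one this

lemma int_cong_norm {p : ℕ} [Fact p.Prime] {n : ℕ} {a b : ℤ} (h : ((p:ℤ))^n ∣ a - b) :
    padicNorm p ((a:ℚ) - (b:ℚ)) ≤ (p:ℚ)^(-(n:ℤ)) := by
  have h' : ((p^n : ℕ) : ℤ) ∣ a - b := by push_cast; exact h
  have := (padicNorm.dvd_iff_norm_le (p := p)).mp h'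
  rwa [Int.cast_sub] at this

lemma fermat_int {p : ℕ} [Fact p.Prime] {a : ℤ} (ha : ¬ (p:ℤ) ∣ a) : (p:ℤ) ∣ a^(p-1) - 1 := by
  have h0 : (a : ZMod p) ≠ 0 := by rwa [Ne, ZMod.intCast_zmod_eq_zero_iff_dvd]
  rw [← ZMod.intCast_zmod_eq_zero_iff_dvd]
  push_cast
  rw [ZMod.pow_card_sub_one_eq_one h0]
  ring

def Sk (p k : ℕ) : ℤ := ∑ i ∈ Finset.range p, (i:ℤ)^k
def Mk (p k : ℕ) : ℤ := ∑ j ∈ Finset.range ((p-1)/2), ((j:ℤ)+1)^k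
def Tk (p k : ℕ) : ℚ := ∑ r ∈ Finset.range (p-1), (1/((r:ℚ)+1))^k

lemma congB {p : ℕ} (hp2 : p % 2 = 1) {m : ℕ} (hk : Even (m+1)) :
    ((p:ℤ))^2 ∣ Sk p (m+1) - (2 * Mk p (m+1) - (m+1) * p * Mk p m) := by
  set P := (p-1)/2 with hPdef
  have hP : p = 2*P+1 := by omega
  have hS : Sk p (m+1) = ∑ j ∈ Finset.range P, (((j+1:ℕ):ℤ)^(m+1) + ((2*P-j:ℕ):ℤ)^(m+1)) := by
    simp only [Sk]
    rw [hP, Finset.sum_range_succ', pair_split (fun r : ℕ => (r:ℤ)^(m+1)) P]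
    simp
  have key : ∀ j ∈ Finset.range P, ((p:ℤ))^2 ∣
      ((((j+1:ℕ):ℤ)^(m+1) + ((2*P-j:ℕ):ℤ)^(m+1)) -
        (2*((j:ℤ)+1)^(m+1) - (m+1)*p*((j:ℤ)+1)^m)) := by
    intro j hj
    simp only [Finset.mem_range] at hj
    have hc1 : ((j+1:ℕ):ℤ) = (j:ℤ)+1 := by push_cast; ring
    have hc2 : ((2*P-j:ℕ):ℤ) = (p:ℤ) - ((j:ℤ)+1) := by
      have h1 : (2*P-j:ℕ) = p - (j+1) := by omega
      rw [h1, Nat.cast_sub (by omega)]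
      push_cast; ring
    rw [hc1, hc2]
    have hev : ((p:ℤ) - ((j:ℤ)+1))^(m+1) = (((j:ℤ)+1) + -(p:ℤ))^(m+1) := by
      rw [← Even.neg_pow hk]; ring_nf
    rw [hev]
    obtain ⟨c, hc⟩ := binom2 ((j:ℤ)+1) (-(p:ℤ)) m
    exact ⟨c, by push_cast at hc ⊢; linear_combination hc⟩
  have hdvd := Finset.dvd_sum key
  have e : Sk p (m+1) - (2 * Mk p (m+1) - (m+1) * p * Mk p m) =
      ∑ j ∈ Finset.range P, ((((j+1:ℕ):ℤ)^(m+1) + ((2*P-j:ℕ):ℤ)^(m+1)) -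
        (2*((j:ℤ)+1)^(m+1) - (m+1)*p*((j:ℤ)+1)^m)) := by
    simp only [hS, Mk, ← hPdef, Finset.sum_sub_distrib, Finset.sum_add_distrib, Finset.mul_sum]
  rw [e]; exact hdvd

lemma congC {p : ℕ} (hp2 : p % 2 = 1) {m : ℕ} (hk : Even (m+1)) :
    ((p:ℤ))^2 ∣ Sk p (m+1) - (2^(m+2) * Mk p (m+1) - (m+1) * p * 2^m * Mk p m) := by
  set P := (p-1)/2 with hPdef
  have hP : p = 2*P+1 := by omega
  have hS : Sk p (m+1) = ∑ j ∈ Finset.range P,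
      (((2*(j+1):ℕ):ℤ)^(m+1) + ((2*P+1-2*(j+1):ℕ):ℤ)^(m+1)) := by
    simp only [Sk]
    rw [hP, Finset.sum_range_succ', evenodd_split (fun r : ℕ => (r:ℤ)^(m+1)) P]
    simp
  have key : ∀ j ∈ Finset.range P, ((p:ℤ))^2 ∣
      ((((2*(j+1):ℕ):ℤ)^(m+1) + ((2*P+1-2*(j+1):ℕ):ℤ)^(m+1)) -
        (2^(m+2)*((j:ℤ)+1)^(m+1) - (m+1)*p*2^m*((j:ℤ)+1)^m)) := by
    intro j hj
    simp only [Finset.mem_range] at hj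
    have hc1 : ((2*(j+1):ℕ):ℤ) = 2*((j:ℤ)+1) := by push_cast; ring
    have hc2 : ((2*P+1-2*(j+1):ℕ):ℤ) = (p:ℤ) - 2*((j:ℤ)+1) := by
      have h1 : (2*P+1-2*(j+1):ℕ) = p - 2*(j+1) := by omega
      rw [h1, Nat.cast_sub (by omega)]
      push_cast; ring
    rw [hc1, hc2]
    have hev : ((p:ℤ) - 2*((j:ℤ)+1))^(m+1) = ((2*((j:ℤ)+1)) + -(p:ℤ))^(m+1) := by
      rw [← Even.neg_pow hk]; ring_nf
    rw [hev, mul_pow]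
    obtain ⟨c, hc⟩ := binom2 (2*((j:ℤ)+1)) (-(p:ℤ)) m
    rw [mul_pow, mul_pow] at hc
    exact ⟨c, by push_cast at hc ⊢; linear_combination hc⟩
  have hdvd := Finset.dvd_sum key
  have e : Sk p (m+1) - (2^(m+2) * Mk p (m+1) - (m+1) * p * 2^m * Mk p m) =
      ∑ j ∈ Finset.range P, ((((2*(j+1):ℕ):ℤ)^(m+1) + ((2*P+1-2*(j+1):ℕ):ℤ)^(m+1)) -
        (2^(m+2)*((j:ℤ)+1)^(m+1) - (m+1)*p*2^m*((j:ℤ)+1)^m)) := by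
    simp only [hS, Mk, ← hPdef, Finset.sum_sub_distrib, Finset.sum_add_distrib, Finset.mul_sum]
  rw [e]; exact hdvd

lemma congD {p : ℕ} (hp2 : p % 2 = 1) {m : ℕ} (hk : Even (m+1)) :
    ((p:ℤ))^2 ∣ (2^(m+1) - 1) * Sk p (m+1) + (m+1) * p * 2^m * Mk p m := by
  obtain ⟨c1, h1⟩ := congB hp2 hk
  obtain ⟨c2, h2⟩ := congC hp2 hk
  exact ⟨2^(m+1)*c1 - c2, by push_cast at h1 h2 ⊢; linear_combination 2^(m+1)*h1 - h2⟩

lemma congE {p : ℕ} [Fact p.Prime] (hp5 : 5 ≤ p) :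
    (p:ℤ) ∣ Mk p (2*p-5) - Mk p (p-4) := by
  rw [Mk, Mk, ← Finset.sum_sub_distrib]
  apply Finset.dvd_sum
  intro j hj
  simp only [Finset.mem_range] at hj
  have hjp : ¬ (p:ℤ) ∣ ((j:ℤ)+1) := by
    have h1 : j+1 < p := by omega
    intro hd
    have := Int.le_of_dvd (by positivity) hd
    omega
  have hf := fermat_int (p := p) hjp
  have he : 2*p-5 = (p-4) + (p-1) := by omega
  rw [he, pow_add]
  obtain ⟨c, hc⟩ := hf
  exact ⟨((j:ℤ)+1)^(p-4) * c, by linear_combination ((j:ℤ)+1)^(p-4) * hc⟩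

lemma two_pow_ne {p : ℕ} [Fact p.Prime] (hp5 : 5 ≤ p) {k : ℕ} (hk : k + 2 = p - 1 ∨ k + 2 = 2*(p-1)) :
    ¬ (p:ℤ) ∣ 2^k - 1 := by
  intro hd
  have h2ne : (2 : ZMod p) ≠ 0 := by
    have : ((2:ℕ) : ZMod p) ≠ 0 := by
      rw [Ne, ZMod.natCast_eq_zero_iff]
      intro h
      have := Nat.le_of_dvd (by norm_num) h
      omega
    simpa using this
  have h1 : ((2:ZMod p))^k = 1 := by
    have : ((2^k - 1 : ℤ) : ZMod p) = 0 := by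
      rw [ZMod.intCast_zmod_eq_zero_iff_dvd]; exact hd
    push_cast at this
    linear_combination this
  have hfl : ((2:ZMod p))^(p-1) = 1 := ZMod.pow_card_sub_one_eq_one h2ne
  have h4 : ((2:ZMod p))^(k+2) = 1 := by
    rcases hk with h | h
    · rw [h]; exact hfl
    · rw [h, two_mul, pow_add, hfl, one_mul]
  have h41 : (4 : ZMod p) = 1 := by
    have := h4
    rw [pow_add, h1, one_mul] at this
    calc (4 : ZMod p) = (2:ZMod p)^2 := by norm_num
    _ = 1 := this
  have h30 : ((3:ℕ) : ZMod p) = 0 := by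
    push_cast
    linear_combination h41
  rw [ZMod.natCast_eq_zero_iff] at h30
  have := Nat.le_of_dvd (by norm_num) h30
  omega

-- p-integrality of Bernoulli numbers with small index
lemma bernoulli_int {p : ℕ} [Fact p.Prime] : ∀ m : ℕ, m + 1 < p → padicNorm p (bernoulli m) ≤ 1 := by
  intro m
  induction m using Nat.strong_induction_on with
  | _ m ih =>
    intro hm
    match m with
    | 0 => simp [bernoulli_zero]
    | Nat.succ n =>
      have hs := sum_bernoulli (n+2)
      rw [if_neg (by omega), Finset.sum_range_succ] at hs
      have hch : ((n+2).choose (n+1) : ℚ) = (n+2 : ℚ) := by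
        rw [Nat.choose_succ_self_right]; push_cast; ring
      have hb : bernoulli (n+1) = -(∑ k ∈ Finset.range (n+1), ((n+2).choose k : ℚ) * bernoulli k) / (n+2) := by
        have h2 : ((n+2:ℚ)) ≠ 0 := by positivity
        field_simp
        linear_combination hs - hch * bernoulli (n+1)
      rw [hb, padicNorm.div, padicNorm.neg]
      have hnum : padicNorm p (∑ k ∈ Finset.range (n+1), ((n+2).choose k : ℚ) * bernoulli k) ≤ 1 := by
        apply normsum _ _ _ (by norm_num)
        intro k hk
        simp only [Finset.mem_range] at hk
        rw [padicNorm.mul]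
        have c1 : padicNorm p ((n+2).choose k : ℚ) ≤ 1 := by
          have := padicNorm.of_int (p := p) ((n+2).choose k : ℤ)
          simpa using this
        have c2 : padicNorm p (bernoulli k) ≤ 1 := ih k (by omega) (by omega)
        calc padicNorm p ((n+2).choose k : ℚ) * padicNorm p (bernoulli k)
            ≤ 1 * 1 := by
              apply mul_le_mul c1 c2 (padicNorm.nonneg _) (by norm_num)
        _ = 1 := by norm_num
      have hden : padicNorm p ((n+2 : ℚ)) = 1 := by
        have : ¬ p ∣ (n+2) := by
          intro h
          have := Nat.le_of_dvd (by norm_num) h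
          omega
        have := norm_nat_eq_one (p := p) this
        push_cast at this
        exact this
      rw [hden, div_one]
      exact hnum

lemma norm_p_pow {p : ℕ} [Fact p.Prime] (j : ℕ) : padicNorm p ((p:ℚ)^j) ≤ (p:ℚ)^(-(j:ℤ)) := by
  have h : ((p:ℤ))^j ∣ ((p:ℤ)^j - 0) := by simp
  have := int_cong_norm (p := p) h
  push_cast at this
  simpa using this

lemma norm_nat_le_one {p : ℕ} [Fact p.Prime] (n : ℕ) : padicNorm p ((n:ℚ)) ≤ 1 := by
  have := padicNorm.of_int (p := p) (n : ℤ)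
  simpa using this

lemma one_lt_p {p : ℕ} [hfp : Fact p.Prime] : (1:ℚ) < p := by
  exact_mod_cast hfp.out.one_lt

lemma faulhaber_step {p : ℕ} [Fact p.Prime] (hp5 : 5 ≤ p) :
    padicNorm p ((Sk p (p-3) : ℚ) - p * bernoulli (p-3)) ≤ (p:ℚ)^(-(2:ℤ)) := by
  have hq : (Sk p (p-3) : ℚ) = ∑ i ∈ Finset.range (p-3+1),
      bernoulli i * ((p-3+1).choose i) * (p:ℚ)^(p-3+1-i) / (((p-3:ℕ):ℚ)+1) := by
    rw [← sum_range_pow p (p-3), Sk]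
    push_cast
    rfl
  rw [Finset.sum_range_succ] at hq
  have hch : ((p-3+1).choose (p-3) : ℚ) = ((p-3:ℕ):ℚ)+1 := by
    rw [Nat.choose_succ_self_right]; push_cast; ring
  have hlast : bernoulli (p-3) * ((p-3+1).choose (p-3) : ℚ) * (p:ℚ)^(p-3+1-(p-3)) / (((p-3:ℕ):ℚ)+1)
      = p * bernoulli (p-3) := by
    have e1 : p-3+1-(p-3) = 1 := by omega
    have e2 : (((p-3:ℕ):ℚ)+1) ≠ 0 := by positivity
    rw [e1, hch]
    push_cast
    field_simp
  have hdiff : (Sk p (p-3) : ℚ) - p * bernoulli (p-3) = ∑ i ∈ Finset.range (p-3),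
      bernoulli i * ((p-3+1).choose i) * (p:ℚ)^(p-3+1-i) / (((p-3:ℕ):ℚ)+1) := by
    rw [hq, hlast]; ring
  rw [hdiff]
  apply normsum _ _ _ (by positivity)
  intro i hi
  simp only [Finset.mem_range] at hi
  rw [padicNorm.div, padicNorm.mul, padicNorm.mul]
  have c1 : padicNorm p (bernoulli i) ≤ 1 := bernoulli_int i (by omega)
  have c2 : padicNorm p (((p-3+1).choose i : ℚ)) ≤ 1 := norm_nat_le_one _
  have c3 : padicNorm p ((p:ℚ)^(p-3+1-i)) ≤ (p:ℚ)^(-(2:ℤ)) := by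
    refine le_trans (norm_p_pow _) ?_
    apply zpow_le_zpow_right₀ (le_of_lt one_lt_p)
    omega
  have c4 : padicNorm p (((p-3+1:ℕ):ℚ)) = 1 := by
    apply norm_nat_eq_one
    intro h
    have := Nat.le_of_dvd (by omega) h
    omega
  have c4' : padicNorm p (((p-3:ℕ):ℚ)+1) = 1 := by
    have e : (((p-3:ℕ):ℚ)+1) = ((p-3+1:ℕ):ℚ) := by push_cast; ring
    rw [e]; exact c4
  have hp0 : (0:ℚ) ≤ (p:ℚ)^(-(2:ℤ)) := by positivity
  calc padicNorm p (bernoulli i) * padicNorm p (((p-3+1).choose i : ℚ)) *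
        padicNorm p ((p:ℚ)^(p-3+1-i)) / padicNorm p (((p-3:ℕ):ℚ)+1)
      = padicNorm p (bernoulli i) * padicNorm p (((p-3+1).choose i : ℚ)) *
        padicNorm p ((p:ℚ)^(p-3+1-i)) := by rw [c4', div_one]
    _ ≤ 1 * 1 * (p:ℚ)^(-(2:ℤ)) := by
        apply mul_le_mul (by
          apply mul_le_mul c1 c2 (padicNorm.nonneg _) (by norm_num)) c3 (padicNorm.nonneg _) (by norm_num)
    _ = (p:ℚ)^(-(2:ℤ)) := by ring

lemma pinv_eq {p : ℕ} : ((p:ℚ))⁻¹ = (p:ℚ)^(-(1:ℤ)) := by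
  rw [zpow_neg, zpow_one]

lemma pz_mul {p : ℕ} [Fact p.Prime] (a b : ℤ) : (p:ℚ)^a * (p:ℚ)^b = (p:ℚ)^(a+b) := by
  rw [← zpow_add₀]
  have : (0:ℚ) < p := by exact_mod_cast (Fact.out : p.Prime).pos
  exact ne_of_gt this

lemma norm_two_pow {p : ℕ} [Fact p.Prime] (hp5 : 5 ≤ p) (j : ℕ) :
    padicNorm p (((2^j : ℤ) : ℚ)) = 1 := by
  apply norm_int_eq_one
  intro h
  have hpp : Prime ((p:ℤ)) := Nat.prime_iff_prime_int.mp (Fact.out : p.Prime)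
  have := hpp.dvd_of_dvd_pow h
  have := Int.le_of_dvd (by norm_num) this
  omega

lemma norm_pB {p : ℕ} [Fact p.Prime] (hp5 : 5 ≤ p)
    (hW : padicNorm p (bernoulli (p-3)) ≤ (p:ℚ)^(-(1:ℤ))) :
    padicNorm p ((p:ℚ) * bernoulli (p-3)) ≤ (p:ℚ)^(-(2:ℤ)) := by
  rw [padicNorm.mul, padicNorm.padicNorm_p_of_prime, pinv_eq]
  calc (p:ℚ)^(-(1:ℤ)) * padicNorm p (bernoulli (p-3)) ≤ (p:ℚ)^(-(1:ℤ)) * (p:ℚ)^(-(1:ℤ)) := by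
        apply mul_le_mul_of_nonneg_left hW (by positivity)
    _ = (p:ℚ)^(-(2:ℤ)) := by rw [pz_mul]; norm_num

lemma norm_Sk {p : ℕ} [Fact p.Prime] (hp5 : 5 ≤ p)
    (hW : padicNorm p (bernoulli (p-3)) ≤ (p:ℚ)^(-(1:ℤ))) :
    padicNorm p ((Sk p (p-3) : ℚ)) ≤ (p:ℚ)^(-(2:ℤ)) := by
  have e : ((Sk p (p-3) : ℤ):ℚ) = (((Sk p (p-3):ℤ):ℚ) - p*bernoulli (p-3)) + p*bernoulli (p-3) := by
    ring
  rw [e]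
  exact le_trans padicNorm.nonarchimedean (max_le (faulhaber_step hp5) (norm_pB hp5 hW))

lemma p_mod_two {p : ℕ} [Fact p.Prime] (hp5 : 5 ≤ p) : p % 2 = 1 := by
  have h := (Fact.out : p.Prime).odd_of_ne_two (by omega)
  rwa [Nat.odd_iff] at h

lemma norm_not_dvd_nat {p : ℕ} [Fact p.Prime] {r : ℕ} (h1 : 0 < r) (h2 : r < p) :
    padicNorm p ((r:ℚ)) = 1 := by
  apply norm_nat_eq_one
  intro h
  have := Nat.le_of_dvd h1 h
  omega

lemma norm_M {p : ℕ} [Fact p.Prime] (hp5 : 5 ≤ p)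
    (hW : padicNorm p (bernoulli (p-3)) ≤ (p:ℚ)^(-(1:ℤ))) :
    padicNorm p ((Mk p (p-4) : ℚ)) ≤ (p:ℚ)^(-(1:ℤ)) := by
  have hodd := p_mod_two hp5
  have hev : Even (p-4+1) := by rw [Nat.even_iff]; omega
  have d1 := congD (p := p) hodd (m := p-4) hev
  rw [show p-4+1 = p-3 from by omega] at d1
  set w : ℤ := 2^(p-3) - 1 with hw
  set A : ℤ := Sk p (p-3) with hA
  set M : ℤ := Mk p (p-4) with hM
  -- d1 : (p:ℤ)^2 ∣ (2^(p-3)-1) * A + (↑(p-4)+1) * p * 2^(p-4) * M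
  have hY2 : padicNorm p (((w*A + (((p-4:ℕ):ℤ)+1) * p * 2^(p-4) * M : ℤ) : ℚ)) ≤ (p:ℚ)^(-(2:ℤ)) := by
    have h0 : ((p:ℤ))^2 ∣ (w*A + (((p-4:ℕ):ℤ)+1) * p * 2^(p-4) * M) - 0 := by
      simpa using d1
    have := int_cong_norm (p := p) h0
    simpa using this
  have hwA : padicNorm p (((w*A : ℤ):ℚ)) ≤ (p:ℚ)^(-(2:ℤ)) := by
    push_cast
    rw [padicNorm.mul]
    calc padicNorm p ((w:ℚ)) * padicNorm p ((A:ℚ)) ≤ 1 * (p:ℚ)^(-(2:ℤ)) := by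
          apply mul_le_mul ?_ (norm_Sk hp5 hW) (padicNorm.nonneg _) (by norm_num)
          have := padicNorm.of_int (p := p) w
          push_cast at this
          exact this
      _ = (p:ℚ)^(-(2:ℤ)) := one_mul _
  have hKM : padicNorm p ((((((p-4:ℕ):ℤ)+1) * p * 2^(p-4) * M : ℤ):ℚ)) ≤ (p:ℚ)^(-(2:ℤ)) := by
    have e : ((((p-4:ℕ):ℤ)+1) * p * 2^(p-4) * M : ℤ) =
        (w*A + (((p-4:ℕ):ℤ)+1) * p * 2^(p-4) * M) - w*A := by ring
    rw [e]
    push_cast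
    push_cast at hY2 hwA
    exact le_trans padicNorm.sub (max_le hY2 hwA)
  -- compute the norm of the coefficient
  have hcoef : padicNorm p ((((((p-4:ℕ):ℤ)+1) * p * 2^(p-4) : ℤ):ℚ)) = (p:ℚ)^(-(1:ℤ)) := by
    push_cast
    rw [padicNorm.mul, padicNorm.mul]
    have h1 : padicNorm p ((((p-4:ℕ):ℚ))+1) = 1 := by
      have e : (((p-4:ℕ):ℚ))+1 = ((p-3:ℕ):ℚ) := by
        have : (p-4)+1 = p-3 := by omega
        rw [← this]; push_cast; ring
      rw [e]
      exact norm_not_dvd_nat (by omega) (by omega)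
    have h2 : padicNorm p (((2:ℚ))^(p-4)) = 1 := by
      have := norm_two_pow hp5 (p := p) (p-4)
      push_cast at this
      exact this
    rw [h1, h2, padicNorm.padicNorm_p_of_prime, pinv_eq]
    ring
  have hsplit : ((((((p-4:ℕ):ℤ)+1) * p * 2^(p-4) * M : ℤ)):ℚ) =
      (((((p-4:ℕ):ℤ)+1) * p * 2^(p-4) : ℤ):ℚ) * ((M:ℚ)) := by push_cast; ring
  rw [hsplit, padicNorm.mul, hcoef] at hKM
  -- hKM : p^(-1) * N(M) ≤ p^(-2)
  have hppos : (0:ℚ) < (p:ℚ)^(-(1:ℤ)) := by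
    have : (0:ℚ) < p := by exact_mod_cast (Fact.out : p.Prime).pos
    positivity
  have hp0 : (p:ℚ) ≠ 0 := by
    have : (0:ℚ) < p := by exact_mod_cast (Fact.out : p.Prime).pos
    exact ne_of_gt this
  have e2 : padicNorm p ((M:ℚ)) = ((p:ℚ)^(-(1:ℤ)) * padicNorm p ((M:ℚ))) * (p:ℚ) := by
    rw [← pinv_eq]; field_simp
  rw [e2]
  calc ((p:ℚ)^(-(1:ℤ)) * padicNorm p ((M:ℚ))) * (p:ℚ) ≤ (p:ℚ)^(-(2:ℤ)) * (p:ℚ) := by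
        apply mul_le_mul_of_nonneg_right hKM (by positivity)
    _ = (p:ℚ)^(-(1:ℤ)) := by
        rw [show ((p:ℚ)^(-(2:ℤ)) * (p:ℚ)) = (p:ℚ)^(-(2:ℤ)+1) from (zpow_add_one₀ hp0 _).symm]
        norm_num

lemma Sk_shift {p k : ℕ} (hp : 1 ≤ p) (hk : 1 ≤ k) :
    ((Sk p k : ℤ):ℚ) = ∑ r ∈ Finset.range (p-1), ((r:ℚ)+1)^k := by
  obtain ⟨q, rfl⟩ : ∃ q, p = q+1 := ⟨p-1, by omega⟩
  rw [Sk, Finset.sum_range_succ']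
  norm_num [zero_pow (show k ≠ 0 by omega)]

lemma norm_2S1_S2 {p : ℕ} [Fact p.Prime] (hp5 : 5 ≤ p)
    (hW : padicNorm p (bernoulli (p-3)) ≤ (p:ℚ)^(-(1:ℤ))) :
    padicNorm p (((2*Sk p (p-3) - Sk p (2*p-4) : ℤ):ℚ)) ≤ (p:ℚ)^(-(2:ℤ)) := by
  have hodd := p_mod_two hp5
  have hev1 : Even (p-4+1) := by rw [Nat.even_iff]; omega
  have hev2 : Even (2*p-5+1) := by rw [Nat.even_iff]; omega
  have d1 := congD (p := p) hodd (m := p-4) hev1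
  rw [show p-4+1 = p-3 from by omega] at d1
  have d2 := congD (p := p) hodd (m := 2*p-5) hev2
  rw [show 2*p-5+1 = 2*p-4 from by omega] at d2
  have e0 := congE (p := p) hp5
  set S1 : ℤ := Sk p (p-3)
  set S2 : ℤ := Sk p (2*p-4)
  set M1 : ℤ := Mk p (p-4)
  set M2 : ℤ := Mk p (2*p-5)
  set w1 : ℤ := 2^(p-3) - 1 with hw1
  set w2 : ℤ := 2^(2*p-4) - 1 with hw2
  set k1 : ℤ := ((p-4:ℕ):ℤ)+1
  set k2 : ℤ := ((2*p-5:ℕ):ℤ)+1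
  set c : ℤ := 2*k1*2^(p-4)*w2 - k2*2^(2*p-5)*w1 with hc
  obtain ⟨a1, h1⟩ := d1
  obtain ⟨a2, h2⟩ := d2
  obtain ⟨b, hb⟩ := e0
  have hX : ((p:ℤ))^2 ∣ w1*w2*(2*S1 - S2) + p*c*M1 :=
    ⟨2*w2*a1 - w1*a2 + w1*k2*2^(2*p-5)*b, by
      linear_combination 2*w2*h1 - w1*h2 + w1*k2*2^(2*p-5)*(p:ℤ)*hb⟩
  have hXn : padicNorm p (((w1*w2*(2*S1 - S2) + p*c*M1 : ℤ):ℚ)) ≤ (p:ℚ)^(-(2:ℤ)) := by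
    have h0 : ((p:ℤ))^2 ∣ (w1*w2*(2*S1 - S2) + p*c*M1) - 0 := by simpa using hX
    have := int_cong_norm (p := p) h0
    simpa using this
  have hcM : padicNorm p (((p*c*M1 : ℤ):ℚ)) ≤ (p:ℚ)^(-(2:ℤ)) := by
    push_cast
    rw [padicNorm.mul, padicNorm.mul, padicNorm.padicNorm_p_of_prime, pinv_eq]
    have hc1 : padicNorm p ((c:ℚ)) ≤ 1 := by
      have := padicNorm.of_int (p := p) c
      push_cast at this; exact this
    have hM1 : padicNorm p ((M1:ℚ)) ≤ (p:ℚ)^(-(1:ℤ)) := by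
      have := norm_M hp5 hW
      push_cast at this; exact this
    calc (p:ℚ)^(-(1:ℤ)) * padicNorm p ((c:ℚ)) * padicNorm p ((M1:ℚ))
        ≤ (p:ℚ)^(-(1:ℤ)) * 1 * (p:ℚ)^(-(1:ℤ)) := by
          apply mul_le_mul (by
            apply mul_le_mul_of_nonneg_left hc1 (by positivity)) hM1 (padicNorm.nonneg _) (by positivity)
      _ = (p:ℚ)^(-(2:ℤ)) := by rw [mul_one, pz_mul]; norm_num
  have hprod : padicNorm p (((w1*w2*(2*S1 - S2) : ℤ):ℚ)) ≤ (p:ℚ)^(-(2:ℤ)) := by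
    have e : (w1*w2*(2*S1 - S2) : ℤ) = (w1*w2*(2*S1 - S2) + p*c*M1) - p*c*M1 := by ring
    rw [e]
    push_cast
    push_cast at hXn hcM
    exact le_trans padicNorm.sub (max_le hXn hcM)
  have hnw1 : padicNorm p ((w1:ℚ)) = 1 := by
    rw [hw1]
    exact norm_int_eq_one (p := p) (two_pow_ne hp5 (Or.inl (by omega : (p-3)+2 = p-1)))
  have hnw2 : padicNorm p ((w2:ℚ)) = 1 := by
    rw [hw2]
    exact norm_int_eq_one (p := p) (two_pow_ne hp5 (Or.inr (by omega : (2*p-4)+2 = 2*(p-1))))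
  have hsplit : (((w1*w2*(2*S1 - S2) : ℤ)):ℚ) = (w1:ℚ) * (w2:ℚ) * (((2*S1 - S2 : ℤ)):ℚ) := by
    push_cast; ring
  rw [hsplit, padicNorm.mul, padicNorm.mul, hnw1, hnw2, one_mul, one_mul] at hprod
  exact hprod

lemma norm_T2 {p : ℕ} [Fact p.Prime] (hp5 : 5 ≤ p)
    (hW : padicNorm p (bernoulli (p-3)) ≤ (p:ℚ)^(-(1:ℤ))) :
    padicNorm p (Tk p 2) ≤ (p:ℚ)^(-(2:ℤ)) := by
  have hD : Tk p 2 - ((2*Sk p (p-3) - Sk p (2*p-4) : ℤ):ℚ)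
      = ∑ r ∈ Finset.range (p-1), ((((r:ℚ)+1)^((p-3)+2) - 1)/((r:ℚ)+1))^2 := by
    have e1 := Sk_shift (p := p) (k := p-3) (by omega) (by omega)
    have e2 := Sk_shift (p := p) (k := 2*p-4) (by omega) (by omega)
    rw [Tk]
    push_cast
    rw [e1, e2, Finset.mul_sum, ← Finset.sum_sub_distrib, ← Finset.sum_sub_distrib]
    apply Finset.sum_congr rfl
    intro r hr
    have hx : ((r:ℚ)+1) ≠ 0 := by positivity
    rw [show 2*p-4 = 2*(p-3)+2 from by omega]
    field_simp
    ring
  have hDn : padicNorm p (Tk p 2 - ((2*Sk p (p-3) - Sk p (2*p-4) : ℤ):ℚ)) ≤ (p:ℚ)^(-(2:ℤ)) := by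
    rw [hD]
    apply normsum _ _ _ (by positivity)
    intro r hr
    simp only [Finset.mem_range] at hr
    have hx0 : ¬ (p:ℤ) ∣ ((r:ℤ)+1) := by
      intro h
      have := Int.le_of_dvd (by positivity) h
      omega
    have hfer : padicNorm p ((((r:ℚ)+1)^((p-3)+2) - 1)) ≤ (p:ℚ)^(-(1:ℤ)) := by
      have h1 : ((p:ℤ))^1 ∣ ((r:ℤ)+1)^(p-1) - 1 := by
        simpa using fermat_int (p := p) hx0
      have := int_cong_norm (p := p) h1
      rw [show p-1 = (p-3)+2 from by omega] at this
      push_cast at this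
      exact this
    have hxn : padicNorm p (((r:ℚ)+1)) = 1 := by
      have := norm_not_dvd_nat (p := p) (r := r+1) (by omega) (by omega)
      push_cast at this
      exact this
    rw [div_pow, padicNorm.div]
    rw [show ((((r:ℚ)+1)^((p-3)+2) - 1))^2 = ((((r:ℚ)+1)^((p-3)+2) - 1)) * ((((r:ℚ)+1)^((p-3)+2) - 1)) from sq _]
    rw [show (((r:ℚ)+1))^2 = (((r:ℚ)+1)) * (((r:ℚ)+1)) from sq _]
    rw [padicNorm.mul, padicNorm.mul, hxn, mul_one]
    calc padicNorm p ((((r:ℚ)+1)^((p-3)+2) - 1)) * padicNorm p ((((r:ℚ)+1)^((p-3)+2) - 1)) / 1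
        = padicNorm p ((((r:ℚ)+1)^((p-3)+2) - 1)) * padicNorm p ((((r:ℚ)+1)^((p-3)+2) - 1)) := by
          rw [div_one]
      _ ≤ (p:ℚ)^(-(1:ℤ)) * (p:ℚ)^(-(1:ℤ)) := by
          apply mul_le_mul hfer hfer (padicNorm.nonneg _) (by positivity)
      _ = (p:ℚ)^(-(2:ℤ)) := by rw [pz_mul]; norm_num
  have e : Tk p 2 = (Tk p 2 - ((2*Sk p (p-3) - Sk p (2*p-4) : ℤ):ℚ)) +
      ((2*Sk p (p-3) - Sk p (2*p-4) : ℤ):ℚ) := by ring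
  rw [e]
  exact le_trans padicNorm.nonarchimedean (max_le hDn (norm_2S1_S2 hp5 hW))

lemma sum_reflect' {A : Type*} [AddCommMonoid A] (f : ℕ → A) (n : ℕ) :
    ∑ r ∈ Finset.range n, f (n - r) = ∑ r ∈ Finset.range n, f (r+1) := by
  rw [← Finset.sum_range_reflect (fun i => f (i+1)) n]
  apply Finset.sum_congr rfl
  intro j hj
  simp only [Finset.mem_range] at hj
  have e : (n-1-j)+1 = n - j := by omega
  rw [e]

lemma norm_inv_nat {p : ℕ} [Fact p.Prime] {y : ℕ} (h1 : 0 < y) (h2 : y < p) :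
    padicNorm p (1/(y:ℚ)) = 1 := by
  rw [padicNorm.div, padicNorm.one, norm_not_dvd_nat h1 h2]
  norm_num

lemma norm_T3 {p : ℕ} [Fact p.Prime] (hp5 : 5 ≤ p) :
    padicNorm p (Tk p 3) ≤ (p:ℚ)^(-(1:ℤ)) := by
  have hodd := p_mod_two hp5
  set P := (p-1)/2 with hP
  have h2P : 2*P = p-1 := by omega
  have hT : Tk p 3 = ∑ r ∈ Finset.range (2*P), (fun x : ℕ => (1/(x:ℚ))^3) (r+1) := by
    rw [Tk, h2P]
    apply Finset.sum_congr rfl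
    intro r _
    push_cast
    ring
  rw [hT, pair_split (fun x : ℕ => (1/(x:ℚ))^3) P]
  apply normsum _ _ _ (by positivity)
  intro j hj
  simp only [Finset.mem_range] at hj
  set x : ℚ := ((j:ℚ)+1) with hx
  have hc1 : (((j+1:ℕ)):ℚ) = x := by push_cast; ring
  have hc2 : (((2*P-j:ℕ)):ℚ) = (p:ℚ) - x := by
    have e : (2*P-j:ℕ) = p - (j+1) := by omega
    rw [e, Nat.cast_sub (by omega)]
    push_cast; ring
  have hx0 : x ≠ 0 := by rw [hx]; positivity
  have hpx0 : (p:ℚ) - x ≠ 0 := by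
    rw [← hc2]
    have : (0:ℚ) < ((2*P-j:ℕ):ℚ) := by
      have : 0 < 2*P-j := by omega
      exact_mod_cast this
    exact ne_of_gt this
  have hiden : (1/(((j+1:ℕ)):ℚ))^3 + (1/(((2*P-j:ℕ)):ℚ))^3
      = (p:ℚ) * ((((p:ℤ)^2 - 3*p*((j:ℤ)+1) + 3*((j:ℤ)+1)^2 : ℤ)):ℚ) / (x^3 * ((p:ℚ)-x)^3) := by
    rw [hc1, hc2]
    push_cast
    field_simp
    ring
  rw [hiden, padicNorm.div, padicNorm.mul]
  have hd : padicNorm p (x^3 * ((p:ℚ)-x)^3) = 1 := by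
    have hnx : padicNorm p x = 1 := by
      rw [← hc1]; exact norm_not_dvd_nat (by omega) (by omega)
    have hnpx : padicNorm p ((p:ℚ)-x) = 1 := by
      rw [← hc2]; exact norm_not_dvd_nat (by omega) (by omega)
    rw [padicNorm.mul, show (x^3) = x*x*x from by ring, show (((p:ℚ)-x)^3) = ((p:ℚ)-x)*((p:ℚ)-x)*((p:ℚ)-x) from by ring]
    rw [padicNorm.mul, padicNorm.mul, padicNorm.mul, padicNorm.mul, hnx, hnpx]
    norm_num
  rw [hd, div_one, padicNorm.padicNorm_p_of_prime, pinv_eq]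
  calc (p:ℚ)^(-(1:ℤ)) * padicNorm p ((((p:ℤ)^2 - 3*p*((j:ℤ)+1) + 3*((j:ℤ)+1)^2 : ℤ)):ℚ)
      ≤ (p:ℚ)^(-(1:ℤ)) * 1 := by
        apply mul_le_mul_of_nonneg_left (padicNorm.of_int _) (by positivity)
    _ = (p:ℚ)^(-(1:ℤ)) := mul_one _

lemma norm_T1 {p : ℕ} [Fact p.Prime] (hp5 : 5 ≤ p)
    (hW : padicNorm p (bernoulli (p-3)) ≤ (p:ℚ)^(-(1:ℤ))) :
    padicNorm p (Tk p 1) ≤ (p:ℚ)^(-(3:ℤ)) := by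
  set F : ℕ → ℚ := fun x => 1/(x:ℚ) with hF
  have hrefl : ∑ r ∈ Finset.range (p-1), F ((p-1) - r) = ∑ r ∈ Finset.range (p-1), F (r+1) :=
    sum_reflect' F (p-1)
  -- main per-term identity summed
  have hmain : ∑ r ∈ Finset.range (p-1), (F (r+1) + F ((p-1)-r) + p*(F (r+1))^2 + (p:ℚ)^2*(F (r+1))^3)
      = ∑ r ∈ Finset.range (p-1), (p:ℚ)^3 * F ((p-1)-r) * (F (r+1))^3 := by
    apply Finset.sum_congr rfl
    intro r hr
    simp only [Finset.mem_range] at hr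
    have hc2 : (((p-1-r:ℕ)):ℚ) = (p:ℚ) - ((r:ℚ)+1) := by
      have e : (p-1-r:ℕ) = p - (r+1) := by omega
      rw [e, Nat.cast_sub (by omega)]
      push_cast; ring
    have hx0 : ((r:ℚ)+1) ≠ 0 := by positivity
    have hpx0 : (p:ℚ) - ((r:ℚ)+1) ≠ 0 := by
      rw [← hc2]
      have h1 : 0 < p-1-r := by omega
      have : (0:ℚ) < ((p-1-r:ℕ):ℚ) := by exact_mod_cast h1
      exact ne_of_gt this
    simp only [hF]
    push_cast
    rw [hc2]
    field_simp
    ring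
  have hQ2 : ∑ r ∈ Finset.range (p-1), (F (r+1))^2 = Tk p 2 := by
    rw [Tk]; apply Finset.sum_congr rfl; intro r _; simp only [hF]; push_cast; ring
  have hQ3 : ∑ r ∈ Finset.range (p-1), (F (r+1))^3 = Tk p 3 := by
    rw [Tk]; apply Finset.sum_congr rfl; intro r _; simp only [hF]; push_cast; ring
  have hQ1 : ∑ r ∈ Finset.range (p-1), F (r+1) = Tk p 1 := by
    rw [Tk]; apply Finset.sum_congr rfl; intro r _; simp only [hF]; push_cast; ring
  -- expand the sum of the LHS
  have hexp : (2:ℚ) * Tk p 1 + (p:ℚ) * Tk p 2 + (p:ℚ)^2 * Tk p 3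
      = ∑ r ∈ Finset.range (p-1), (p:ℚ)^3 * F ((p-1)-r) * (F (r+1))^3 := by
    rw [← hmain]
    simp only [Finset.sum_add_distrib, ← Finset.mul_sum]
    rw [hrefl, hQ1, hQ2, hQ3]
    ring
  have hRHS : padicNorm p (∑ r ∈ Finset.range (p-1), (p:ℚ)^3 * F ((p-1)-r) * (F (r+1))^3)
      ≤ (p:ℚ)^(-(3:ℤ)) := by
    apply normsum _ _ _ (by positivity)
    intro r hr
    simp only [Finset.mem_range] at hr
    rw [padicNorm.mul, padicNorm.mul]
    have h1 : padicNorm p ((p:ℚ)^3) ≤ (p:ℚ)^(-(3:ℤ)) := by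
      have := norm_p_pow (p := p) 3
      simpa using this
    have h2 : padicNorm p (F ((p-1)-r)) = 1 := by
      simp only [hF]
      exact norm_inv_nat (by omega) (by omega)
    have h3 : padicNorm p ((F (r+1))^3) = 1 := by
      have hb : padicNorm p (F (r+1)) = 1 := by
        simp only [hF]
        exact norm_inv_nat (by omega) (by omega)
      rw [show (F (r+1))^3 = F (r+1) * F (r+1) * F (r+1) from by ring,
        padicNorm.mul, padicNorm.mul, hb]
      norm_num
    rw [h2, h3, mul_one, mul_one]
    exact h1
  -- put it together
  have h2T1 : padicNorm p ((2:ℚ) * Tk p 1) ≤ (p:ℚ)^(-(3:ℤ)) := by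
    have e : (2:ℚ) * Tk p 1 = (∑ r ∈ Finset.range (p-1), (p:ℚ)^3 * F ((p-1)-r) * (F (r+1))^3)
        - (p:ℚ) * Tk p 2 - (p:ℚ)^2 * Tk p 3 := by
      rw [← hexp]; ring
    rw [e]
    have hpT2 : padicNorm p ((p:ℚ) * Tk p 2) ≤ (p:ℚ)^(-(3:ℤ)) := by
      rw [padicNorm.mul, padicNorm.padicNorm_p_of_prime, pinv_eq]
      calc (p:ℚ)^(-(1:ℤ)) * padicNorm p (Tk p 2) ≤ (p:ℚ)^(-(1:ℤ)) * (p:ℚ)^(-(2:ℤ)) := by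
            apply mul_le_mul_of_nonneg_left (norm_T2 hp5 hW) (by positivity)
        _ = (p:ℚ)^(-(3:ℤ)) := by rw [pz_mul]; norm_num
    have hpT3 : padicNorm p ((p:ℚ)^2 * Tk p 3) ≤ (p:ℚ)^(-(3:ℤ)) := by
      rw [padicNorm.mul]
      have hn2 : padicNorm p ((p:ℚ)^2) ≤ (p:ℚ)^(-(2:ℤ)) := by
        have := norm_p_pow (p := p) 2
        simpa using this
      calc padicNorm p ((p:ℚ)^2) * padicNorm p (Tk p 3) ≤ (p:ℚ)^(-(2:ℤ)) * (p:ℚ)^(-(1:ℤ)) := by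
            apply mul_le_mul hn2 (norm_T3 hp5) (padicNorm.nonneg _) (by positivity)
        _ = (p:ℚ)^(-(3:ℤ)) := by rw [pz_mul]; norm_num
    exact le_trans padicNorm.sub (max_le (le_trans padicNorm.sub (max_le hRHS hpT2)) hpT3)
  have h2n : padicNorm p ((2:ℚ)) = 1 := by
    have := norm_not_dvd_nat (p := p) (r := 2) (by norm_num) (by omega)
    push_cast at this
    exact this
  rw [padicNorm.mul, h2n, one_mul] at h2T1
  exact h2T1

def Blk (p j : ℕ) : ℚ := ∑ r ∈ Finset.range (p-1), (1/((j*p+r+1 : ℕ):ℚ))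

lemma norm_block {p : ℕ} [Fact p.Prime] (hp5 : 5 ≤ p)
    (hW : padicNorm p (bernoulli (p-3)) ≤ (p:ℚ)^(-(1:ℤ))) (j : ℕ) :
    padicNorm p (Blk p j) ≤ (p:ℚ)^(-(3:ℤ)) := by
  have hiden : Blk p j = Tk p 1 - (j:ℚ)*p*Tk p 2 + (j:ℚ)^2*(p:ℚ)^2*Tk p 3
      - ∑ r ∈ Finset.range (p-1), ((j:ℚ)^3*(p:ℚ)^3/((((r:ℚ)+1))^3*((j*p+r+1 : ℕ):ℚ))) := by
    rw [Blk, Tk, Tk, Tk, Finset.mul_sum, Finset.mul_sum, ← Finset.sum_sub_distrib,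
      ← Finset.sum_add_distrib, ← Finset.sum_sub_distrib]
    apply Finset.sum_congr rfl
    intro r hr
    simp only [Finset.mem_range] at hr
    have hx0 : ((r:ℚ)+1) ≠ 0 := by positivity
    have hy : ((j*p+r+1 : ℕ):ℚ) = (j:ℚ)*(p:ℚ) + ((r:ℚ)+1) := by push_cast; ring
    have hy0 : ((j*p+r+1 : ℕ):ℚ) ≠ 0 := by
      have : (0:ℚ) < ((j*p+r+1 : ℕ):ℚ) := by exact_mod_cast Nat.succ_pos _
      exact ne_of_gt this
    rw [hy] at hy0 ⊢
    field_simp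
    ring
  rw [hiden]
  have h1 : padicNorm p (Tk p 1) ≤ (p:ℚ)^(-(3:ℤ)) := norm_T1 hp5 hW
  have h2 : padicNorm p ((j:ℚ)*p*Tk p 2) ≤ (p:ℚ)^(-(3:ℤ)) := by
    rw [padicNorm.mul, padicNorm.mul, padicNorm.padicNorm_p_of_prime, pinv_eq]
    calc padicNorm p ((j:ℚ)) * (p:ℚ)^(-(1:ℤ)) * padicNorm p (Tk p 2)
        ≤ 1 * (p:ℚ)^(-(1:ℤ)) * (p:ℚ)^(-(2:ℤ)) := by
          apply mul_le_mul (mul_le_mul_of_nonneg_right (norm_nat_le_one j) (by positivity))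
            (norm_T2 hp5 hW) (padicNorm.nonneg _) (by positivity)
      _ = (p:ℚ)^(-(3:ℤ)) := by rw [one_mul, pz_mul]; norm_num
  have h3 : padicNorm p ((j:ℚ)^2*(p:ℚ)^2*Tk p 3) ≤ (p:ℚ)^(-(3:ℤ)) := by
    rw [padicNorm.mul, padicNorm.mul]
    have hj2 : padicNorm p ((j:ℚ)^2) ≤ 1 := by
      have e : ((j:ℚ))^2 = ((j^2 : ℕ):ℚ) := by push_cast; ring
      rw [e]; exact norm_nat_le_one _
    have hp2 : padicNorm p ((p:ℚ)^2) ≤ (p:ℚ)^(-(2:ℤ)) := by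
      have := norm_p_pow (p := p) 2
      simpa using this
    calc padicNorm p ((j:ℚ)^2) * padicNorm p ((p:ℚ)^2) * padicNorm p (Tk p 3)
        ≤ 1 * (p:ℚ)^(-(2:ℤ)) * (p:ℚ)^(-(1:ℤ)) := by
          apply mul_le_mul (mul_le_mul hj2 hp2 (padicNorm.nonneg _) (by norm_num))
            (norm_T3 hp5) (padicNorm.nonneg _) (by positivity)
      _ = (p:ℚ)^(-(3:ℤ)) := by rw [one_mul, pz_mul]; norm_num
  have h4 : padicNorm p (∑ r ∈ Finset.range (p-1),
      ((j:ℚ)^3*(p:ℚ)^3/((((r:ℚ)+1))^3*((j*p+r+1 : ℕ):ℚ)))) ≤ (p:ℚ)^(-(3:ℤ)) := by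
    apply normsum _ _ _ (by positivity)
    intro r hr
    simp only [Finset.mem_range] at hr
    rw [padicNorm.div, padicNorm.mul]
    have hj3 : padicNorm p ((j:ℚ)^3) ≤ 1 := by
      have e : ((j:ℚ))^3 = ((j^3 : ℕ):ℚ) := by push_cast; ring
      rw [e]; exact norm_nat_le_one _
    have hp3 : padicNorm p ((p:ℚ)^3) ≤ (p:ℚ)^(-(3:ℤ)) := by
      have := norm_p_pow (p := p) 3
      simpa using this
    have hd : padicNorm p ((((r:ℚ)+1))^3*((j*p+r+1 : ℕ):ℚ)) = 1 := by
      have ha : padicNorm p (((r:ℚ)+1)) = 1 := by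
        have := norm_not_dvd_nat (p := p) (r := r+1) (by omega) (by omega)
        push_cast at this
        exact this
      have hb : padicNorm p (((j*p+r+1 : ℕ):ℚ)) = 1 := by
        apply norm_nat_eq_one
        intro hdvd
        have h1 : p ∣ r+1 := by
          have : j*p+r+1 = p*j + (r+1) := by ring
          rw [this] at hdvd
          exact (Nat.dvd_add_right (Dvd.intro j rfl)).mp hdvd
        have := Nat.le_of_dvd (by omega) h1
        omega
      rw [padicNorm.mul, show (((r:ℚ)+1))^3 = ((r:ℚ)+1)*((r:ℚ)+1)*((r:ℚ)+1) from by ring,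
        padicNorm.mul, padicNorm.mul, ha, hb]
      norm_num
    rw [hd, div_one]
    calc padicNorm p ((j:ℚ)^3) * padicNorm p ((p:ℚ)^3) ≤ 1 * (p:ℚ)^(-(3:ℤ)) := by
          apply mul_le_mul hj3 hp3 (padicNorm.nonneg _) (by norm_num)
      _ = (p:ℚ)^(-(3:ℤ)) := one_mul _
  exact le_trans padicNorm.sub (max_le (le_trans padicNorm.nonarchimedean
    (max_le (le_trans padicNorm.sub (max_le h1 h2)) h3)) h4)

lemma H_split (p : ℕ) (hp : 1 ≤ p) : ∀ n : ℕ,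
    H (p*n) = H n / p + ∑ j ∈ Finset.range n, Blk p j := by
  intro n
  induction n with
  | zero => simp [H]
  | succ n ih =>
    have e1 : p*(n+1) = p*n + p := by ring
    rw [e1, H, Finset.sum_range_add]
    have e2 : (∑ i ∈ Finset.range (p*n), (1:ℚ)/((i:ℚ)+1)) = H (p*n) := by rw [H]
    rw [e2, ih]
    have e3 : (∑ i ∈ Finset.range p, (1:ℚ)/(((p*n+i : ℕ):ℚ)+1)) = Blk p n + 1/((p:ℚ)*((n:ℚ)+1)) := by
      have hr : Finset.range p = Finset.range ((p-1)+1) := by congr 1; omega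
      rw [hr, Finset.sum_range_succ]
      congr 1
      · rw [Blk]
        apply Finset.sum_congr rfl
        intro r _
        have : ((n*p+r+1 : ℕ):ℚ) = ((p*n+r : ℕ):ℚ)+1 := by push_cast; ring
        rw [this]
      · have h5 : ((p*n+(p-1) : ℕ):ℚ)+1 = (p:ℚ)*((n:ℚ)+1) := by
          have e : (p*n+(p-1))+1 = p*(n+1) := by omega
          have h := congrArg (fun x : ℕ => (x:ℚ)) e
          push_cast at h
          push_cast
          linarith
        rw [h5]
    have e4 : H (n+1) = H n + 1/((n:ℚ)+1) := by
      rw [H, H, Finset.sum_range_succ]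
    rw [Finset.sum_range_succ, e4]
    have hp0 : (p:ℚ) ≠ 0 := by
      have : (0:ℚ) < p := by exact_mod_cast hp
      exact ne_of_gt this
    have hn0 : ((n:ℚ)+1) ≠ 0 := by positivity
    calc H (n:ℕ) / p + ∑ j ∈ Finset.range n, Blk p j +
          ∑ i ∈ Finset.range p, (1:ℚ)/(((p*n+i : ℕ):ℚ)+1)
        = H n / p + ∑ j ∈ Finset.range n, Blk p j + (Blk p n + 1/((p:ℚ)*((n:ℚ)+1))) := by rw [e3]
      _ = (H n + 1/((n:ℚ)+1)) / p + (∑ j ∈ Finset.range n, Blk p j + Blk p n) := by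
          field_simp
          ring

theorem stmt_19 (p : ℕ) (hp : p.Prime) (hp5 : 5 ≤ p)
    (hW : 1 ≤ padicValRat p (bernoulli (p - 3)))
    (n : ℕ) (hn : 1 ≤ n) (hpn : ¬ p ∣ n)
    (hval : padicValRat p (H n) = 3) :
    padicValRat p (H (p * n)) = 2 := by
  haveI : Fact p.Prime := ⟨hp⟩
  have hp0 : ((p:ℚ)) ≠ 0 := by
    have : (0:ℚ) < p := by exact_mod_cast hp.pos
    exact ne_of_gt this
  have hWn : padicNorm p (bernoulli (p-3)) ≤ (p:ℚ)^(-(1:ℤ)) := by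
    by_cases hB : bernoulli (p-3) = 0
    · rw [hB, padicNorm.zero]; positivity
    · rw [padicNorm.eq_zpow_of_nonzero hB]
      apply zpow_le_zpow_right₀ (le_of_lt one_lt_p)
      linarith
  have hHpos : ∀ m : ℕ, 1 ≤ m → 0 < H m := by
    intro m hm
    rw [H]
    apply Finset.sum_pos
    · intro i _; positivity
    · exact ⟨0, Finset.mem_range.mpr (by omega)⟩
  have hHn_ne : H n ≠ 0 := ne_of_gt (hHpos n hn)
  have hNHn : padicNorm p (H n) = (p:ℚ)^(-(3:ℤ)) := by
    rw [padicNorm.eq_zpow_of_nonzero hHn_ne, hval]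
  have hNdiv : padicNorm p (H n / p) = (p:ℚ)^(-(2:ℤ)) := by
    rw [padicNorm.div, hNHn, padicNorm.padicNorm_p_of_prime, pinv_eq, ← zpow_sub₀ hp0]
    norm_num
  have htail : padicNorm p (∑ j ∈ Finset.range n, Blk p j) ≤ (p:ℚ)^(-(3:ℤ)) :=
    normsum _ _ _ (by positivity) (fun j _ => norm_block hp5 hWn j)
  have hlt : (p:ℚ)^(-(3:ℤ)) < (p:ℚ)^(-(2:ℤ)) := by
    apply zpow_lt_zpow_right₀ one_lt_p (by norm_num)
  have htail2 : padicNorm p (∑ j ∈ Finset.range n, Blk p j) < padicNorm p (H n / p) := by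
    rw [hNdiv]
    exact lt_of_le_of_lt htail hlt
  have hmax : padicNorm p (H (p*n)) = (p:ℚ)^(-(2:ℤ)) := by
    rw [H_split p (by omega) n]
    rw [padicNorm.add_eq_max_of_ne (ne_of_lt htail2).symm]
    rw [max_eq_left (le_of_lt htail2), hNdiv]
  have hHpn_ne : H (p*n) ≠ 0 := by
    apply ne_of_gt
    apply hHpos
    have h1 : p * n ≠ 0 := Nat.mul_ne_zero (by omega) (by omega)
    omega
  rw [padicNorm.eq_zpow_of_nonzero hHpn_ne] at hmax
  have hinj := zpow_right_injective₀ (show (0:ℚ) < p from by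
      exact_mod_cast hp.pos) (ne_of_gt one_lt_p) hmax
  have : -(padicValRat p (H (p*n))) = -2 := hinj
  linarith
end
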